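/- arXiv:1812.09493 — 2 statements merged into one kernel-verified Lean document; each statement's English description precedes it below -/
import Mathlib

section
/- Let c be a rail arc and let 0 < a < b < 1 with A = c(a), B = c(b), and suppose c([a,b]) = [A,B], the straight line segment from A to B. Let C ∈ ℝ³ be a point such that A, B, C are affinely independent and the closed triangle T = convexHull{A,B,C} satisfies T ∩ c([0,1]) = [A,B] and T ∩ (ℓ1 ∪ ℓ2) = ∅. Let c' be a rail arc with c'(t) = c(t) for all t ∉ (a,b) and with c'([a,b]) = [A,C] ∪ [C,B]. Then there exists a rail isotopy taking c onto c' (i.e. every triangle move on a rail arc is realized by a rail isotopy of ℝ³). -/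
open Set unitInterval Function

open Topology Filter Metric

noncomputable section

/-- We model `ℝ³` as `Fin 3 → ℝ`. -/
abbrev R3 := Fin 3 → ℝ

/-- `ℓ` is a line (one-dimensional affine subspace) in `ℝ³` with direction vector `v`. -/
def IsLineWithDir (v : R3) (ℓ : Set R3) : Prop :=
  ∃ p : R3, ℓ = {x : R3 | ∃ t : ℝ, x = p + t • v}

/-- `ℓ1, ℓ2` are two disjoint parallel lines in `ℝ³` (the rails): one-dimensional affine
subspaces with the same direction, and `ℓ1 ≠ ℓ2`. -/
def RailsPair (ℓ1 ℓ2 : Set R3) : Prop :=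
  (∃ v : R3, v ≠ 0 ∧ IsLineWithDir v ℓ1 ∧ IsLineWithDir v ℓ2) ∧ Disjoint ℓ1 ℓ2 ∧ ℓ1 ≠ ℓ2

/-- A rail arc: a continuous injective map `c : [0,1] → ℝ³` with `c 0 ∈ ℓ1`, `c 1 ∈ ℓ2`,
and `c t ∉ ℓ1 ∪ ℓ2` for all interior parameters `t ∈ (0,1)`. -/
def RailArc (ℓ1 ℓ2 : Set R3) (c : unitInterval → R3) : Prop :=
  Continuous c ∧ Function.Injective c ∧ c 0 ∈ ℓ1 ∧ c 1 ∈ ℓ2 ∧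
    ∀ t : unitInterval, 0 < (t : ℝ) → (t : ℝ) < 1 → c t ∉ ℓ1 ∪ ℓ2

/-- A rail isotopy taking the rail arc `c₁` onto the rail arc `c₂`: a continuous map
`H : [0,1] × ℝ³ → ℝ³` with `H 0 = id`, each time slice a homeomorphism of `ℝ³` mapping
each rail onto itself, and the time-1 slice mapping the image of `c₁` onto that of `c₂`. -/
def RailIsotopy (ℓ1 ℓ2 : Set R3) (c₁ c₂ : unitInterval → R3)
    (H : unitInterval → R3 → R3) : Prop :=
  Continuous (Function.uncurry H) ∧ H 0 = id ∧
    (∀ t : unitInterval, ∃ φ : R3 ≃ₜ R3, ⇑φ = H t ∧ φ '' ℓ1 = ℓ1 ∧ φ '' ℓ2 = ℓ2) ∧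
    H 1 '' (Set.range c₁) = Set.range c₂


/-- tent function: PL, 0 outside [a,b], 1 at 0 (assuming a < 0 < b). -/
def tentF (a b η : ℝ) : ℝ := max 0 (min 1 (min ((η - a) / (-a)) ((b - η) / b)))

/-- tent function with peak at v: 0 outside [a,b], 1 at v. -/
def tentG (a v b η : ℝ) : ℝ := max 0 (min 1 (min ((η - a) / (v - a)) ((b - η) / (b - v))))

def pushF (a v b η : ℝ) : ℝ := η + v * tentF a b η
def pushG (a v b η : ℝ) : ℝ := η - v * tentG a v b η

lemma tentF_nonneg (a b η : ℝ) : 0 ≤ tentF a b η := le_max_left _ _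
lemma tentF_le_one (a b η : ℝ) : tentF a b η ≤ 1 := by
  rw [tentF]
  rcases le_or_gt (min 1 (min ((η - a) / (-a)) ((b - η) / b))) 0 with h | h
  · rw [max_eq_left h]; norm_num
  · rw [max_eq_right h.le]; exact min_le_left _ _
lemma tentG_nonneg (a v b η : ℝ) : 0 ≤ tentG a v b η := le_max_left _ _
lemma tentG_le_one (a v b η : ℝ) : tentG a v b η ≤ 1 := by
  rw [tentG]
  rcases le_or_gt (min 1 (min ((η - a) / (v - a)) ((b - η) / (b - v)))) 0 with h | h
  · rw [max_eq_left h]; norm_num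
  · rw [max_eq_right h.le]; exact min_le_left _ _

lemma pushF_zero (a b η : ℝ) : pushF a 0 b η = η := by simp [pushF]
lemma pushG_zero (a b η : ℝ) : pushG a 0 b η = η := by simp [pushG]

-- tentF evaluation
lemma tentF_left {a b η : ℝ} (ha : a < 0) (hb : 0 < b) (h1 : a ≤ η) (h2 : η ≤ 0) :
    tentF a b η = (η - a) / (-a) := by
  have hP1 : (η - a) / (-a) ≤ 1 := by
    rw [div_le_one (by linarith)]; linarith
  have hPQ : (η - a) / (-a) ≤ (b - η) / b := by
    apply hP1.trans
    rw [le_div_iff₀ hb]; linarith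
  have hP0 : 0 ≤ (η - a) / (-a) := div_nonneg (by linarith) (by linarith)
  rw [tentF, min_eq_left hPQ, min_eq_right hP1, max_eq_right hP0]

lemma tentF_right {a b η : ℝ} (ha : a < 0) (hb : 0 < b) (h1 : 0 ≤ η) (h2 : η ≤ b) :
    tentF a b η = (b - η) / b := by
  have hQ1 : (b - η) / b ≤ 1 := by rw [div_le_one hb]; linarith
  have hQP : (b - η) / b ≤ (η - a) / (-a) := by
    apply hQ1.trans
    rw [le_div_iff₀ (by linarith : (0:ℝ) < -a)]; linarith
  have hQ0 : 0 ≤ (b - η) / b := div_nonneg (by linarith) hb.le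
  rw [tentF, min_eq_right hQP, min_eq_right hQ1, max_eq_right hQ0]

lemma tentF_low {a b η : ℝ} (ha : a < 0) (h : η ≤ a) : tentF a b η = 0 := by
  have : (η - a) / (-a) ≤ 0 := div_nonpos_of_nonpos_of_nonneg (by linarith) (by linarith)
  have hm : min 1 (min ((η - a) / (-a)) ((b - η) / b)) ≤ 0 :=
    le_trans (le_trans (min_le_right _ _) (min_le_left _ _)) this
  exact max_eq_left hm

lemma tentF_high {a b η : ℝ} (hb : 0 < b) (h : b ≤ η) : tentF a b η = 0 := by
  have : (b - η) / b ≤ 0 := div_nonpos_of_nonpos_of_nonneg (by linarith) hb.le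
  have hm : min 1 (min ((η - a) / (-a)) ((b - η) / b)) ≤ 0 :=
    le_trans (le_trans (min_le_right _ _) (min_le_right _ _)) this
  exact max_eq_left hm

-- tentG evaluation
lemma tentG_left {a v b η : ℝ} (ha : a < v) (hb : v < b) (h1 : a ≤ η) (h2 : η ≤ v) :
    tentG a v b η = (η - a) / (v - a) := by
  have hP1 : (η - a) / (v - a) ≤ 1 := by rw [div_le_one (by linarith)]; linarith
  have hPQ : (η - a) / (v - a) ≤ (b - η) / (b - v) := by
    apply hP1.trans
    rw [le_div_iff₀ (by linarith)]; linarith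
  have hP0 : 0 ≤ (η - a) / (v - a) := div_nonneg (by linarith) (by linarith)
  rw [tentG, min_eq_left hPQ, min_eq_right hP1, max_eq_right hP0]

lemma tentG_right {a v b η : ℝ} (ha : a < v) (hb : v < b) (h1 : v ≤ η) (h2 : η ≤ b) :
    tentG a v b η = (b - η) / (b - v) := by
  have hQ1 : (b - η) / (b - v) ≤ 1 := by rw [div_le_one (by linarith)]; linarith
  have hQP : (b - η) / (b - v) ≤ (η - a) / (v - a) := by
    apply hQ1.trans
    rw [le_div_iff₀ (by linarith)]; linarith
  have hQ0 : 0 ≤ (b - η) / (b - v) := div_nonneg (by linarith) (by linarith)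
  rw [tentG, min_eq_right hQP, min_eq_right hQ1, max_eq_right hQ0]

lemma tentG_low {a v b η : ℝ} (ha : a < v) (h : η ≤ a) : tentG a v b η = 0 := by
  have : (η - a) / (v - a) ≤ 0 := div_nonpos_of_nonpos_of_nonneg (by linarith) (by linarith)
  have hm : min 1 (min ((η - a) / (v - a)) ((b - η) / (b - v))) ≤ 0 :=
    le_trans (le_trans (min_le_right _ _) (min_le_left _ _)) this
  exact max_eq_left hm

lemma tentG_high {a v b η : ℝ} (hb : v < b) (h : b ≤ η) : tentG a v b η = 0 := by
  have : (b - η) / (b - v) ≤ 0 := div_nonpos_of_nonpos_of_nonneg (by linarith) (by linarith)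
  have hm : min 1 (min ((η - a) / (v - a)) ((b - η) / (b - v))) ≤ 0 :=
    le_trans (le_trans (min_le_right _ _) (min_le_right _ _)) this
  exact max_eq_left hm

-- inverse identities
lemma pushG_pushF {a v b : ℝ} (ha : a < 0) (hv : 0 ≤ v) (hvb : v < b) (η : ℝ) :
    pushG a v b (pushF a v b η) = η := by
  have hb : 0 < b := lt_of_le_of_lt hv hvb
  have hane : -a ≠ 0 := by linarith
  have ha0 : a ≠ 0 := ha.ne
  have hb0 : b ≠ 0 := hb.ne'
  have hva : v - a ≠ 0 := by linarith
  have hbv : b - v ≠ 0 := by linarith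
  rcases le_or_gt η a with h | h
  · rw [pushF, tentF_low ha h]
    have e : η + v * 0 = η := by ring
    rw [e, pushG, tentG_low (by linarith) h]; ring
  rcases le_or_gt η 0 with h2 | h2
  · rw [pushF, tentF_left ha hb h.le h2]
    have hr0 : 0 ≤ (η - a) / (-a) := div_nonneg (by linarith) (by linarith)
    have hy1 : a ≤ η + v * ((η - a) / (-a)) := by nlinarith
    have hy2 : η + v * ((η - a) / (-a)) ≤ v := by
      have e : η + v * ((η - a) / (-a)) - v = η * (v - a) / (-a) := by field_simp; ring
      have : η * (v - a) / (-a) ≤ 0 :=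
        div_nonpos_of_nonpos_of_nonneg (by nlinarith) (by linarith)
      linarith
    rw [pushG, tentG_left (by linarith) hvb hy1 hy2]
    have h5 : (η + v * ((η - a) / (-a)) - a) / (v - a) = (η - a) / (-a) := by
      field_simp; ring
    rw [h5]; ring
  rcases le_or_gt η b with h3 | h3
  · rw [pushF, tentF_right ha hb h2.le h3]
    have hr0 : 0 ≤ (b - η) / b := div_nonneg (by linarith) hb.le
    have hy1 : v ≤ η + v * ((b - η) / b) := by
      have e : η + v * ((b - η) / b) - v = η * (b - v) / b := by field_simp; ring
      have : 0 ≤ η * (b - v) / b := div_nonneg (by nlinarith) hb.le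
      linarith
    have hy2 : η + v * ((b - η) / b) ≤ b := by
      have e : b - (η + v * ((b - η) / b)) = (b - η) * (b - v) / b := by field_simp; ring
      have : 0 ≤ (b - η) * (b - v) / b := div_nonneg (by nlinarith) hb.le
      linarith
    rw [pushG, tentG_right (by linarith) hvb hy1 hy2]
    have h5 : (b - (η + v * ((b - η) / b))) / (b - v) = (b - η) / b := by
      field_simp; ring
    rw [h5]; ring
  · rw [pushF, tentF_high hb h3.le]
    have e : η + v * 0 = η := by ring
    rw [e, pushG, tentG_high hvb h3.le]; ring

lemma pushF_pushG {a v b : ℝ} (ha : a < 0) (hv : 0 ≤ v) (hvb : v < b) (η : ℝ) :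
    pushF a v b (pushG a v b η) = η := by
  have hb : 0 < b := lt_of_le_of_lt hv hvb
  have hane : -a ≠ 0 := by linarith
  have ha0 : a ≠ 0 := ha.ne
  have hb0 : b ≠ 0 := hb.ne'
  have hva : v - a ≠ 0 := by linarith
  have hbv : b - v ≠ 0 := by linarith
  rcases le_or_gt η a with h | h
  · rw [pushG, tentG_low (by linarith) h]
    have e : η - v * 0 = η := by ring
    rw [e, pushF, tentF_low ha h]; ring
  rcases le_or_gt η v with h2 | h2
  · rw [pushG, tentG_left (by linarith) hvb h.le h2]
    have hr0 : 0 ≤ (η - a) / (v - a) := div_nonneg (by linarith) (by linarith)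
    have hr1 : (η - a) / (v - a) ≤ 1 := by rw [div_le_one (by linarith)]; linarith
    have hx1 : a ≤ η - v * ((η - a) / (v - a)) := by
      have e : η - v * ((η - a) / (v - a)) - a = (η - a) * (-a) / (v - a) := by
        field_simp; ring
      have : 0 ≤ (η - a) * (-a) / (v - a) :=
        div_nonneg (by nlinarith) (by linarith)
      linarith
    have hx2 : η - v * ((η - a) / (v - a)) ≤ 0 := by
      have e : η - v * ((η - a) / (v - a)) = a * (v - η) / (v - a) := by field_simp; ring
      rw [e]
      exact div_nonpos_of_nonpos_of_nonneg (by nlinarith) (by linarith)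
    rw [pushF, tentF_left ha hb hx1 hx2]
    have h5 : (η - v * ((η - a) / (v - a)) - a) / (-a) = (η - a) / (v - a) := by
      field_simp; ring
    rw [h5]; ring
  rcases le_or_gt η b with h3 | h3
  · rw [pushG, tentG_right (by linarith) hvb h2.le h3]
    have hr0 : 0 ≤ (b - η) / (b - v) := div_nonneg (by linarith) (by linarith)
    have hx1 : 0 ≤ η - v * ((b - η) / (b - v)) := by
      have e : η - v * ((b - η) / (b - v)) = b * (η - v) / (b - v) := by field_simp; ring
      rw [e]
      exact div_nonneg (by nlinarith) (by linarith)
    have hx2 : η - v * ((b - η) / (b - v)) ≤ b := by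
      have e : b - (η - v * ((b - η) / (b - v))) = b * (b - η) / (b - v) := by
        field_simp; ring
      have : 0 ≤ b * (b - η) / (b - v) := div_nonneg (by nlinarith) (by linarith)
      linarith
    rw [pushF, tentF_right ha hb hx1 hx2]
    have h5 : (b - (η - v * ((b - η) / (b - v)))) / b = (b - η) / (b - v) := by
      field_simp; ring
    rw [h5]; ring
  · rw [pushG, tentG_high hvb h3.le]
    have e : η - v * 0 = η := by ring
    rw [e, pushF, tentF_high hb h3.le]; ring



def clamp01 (t : ℝ) : ℝ := max 0 (min 1 t)

lemma clamp01_nonneg (t : ℝ) : 0 ≤ clamp01 t := le_max_left _ _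
lemma clamp01_le_one (t : ℝ) : clamp01 t ≤ 1 := by
  rw [clamp01]
  rcases le_or_gt (min 1 t) 0 with h | h
  · rw [max_eq_left h]; norm_num
  · rw [max_eq_right h.le]; exact min_le_left _ _
lemma clamp01_zero : clamp01 0 = 0 := by norm_num [clamp01]
lemma clamp01_one : clamp01 1 = 1 := by norm_num [clamp01]
lemma continuous_clamp01 : Continuous clamp01 :=
  continuous_const.max (continuous_const.min continuous_id)

def thetaf (εf : ℝ → ℝ) (ξ z : ℝ) : ℝ := max 0 (min 1 (2 - 2 * |z| / εf ξ))

lemma thetaf_nonneg (εf : ℝ → ℝ) (ξ z : ℝ) : 0 ≤ thetaf εf ξ z := le_max_left _ _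
lemma thetaf_le_one (εf : ℝ → ℝ) (ξ z : ℝ) : thetaf εf ξ z ≤ 1 := by
  rw [thetaf]
  rcases le_or_gt (min 1 (2 - 2 * |z| / εf ξ)) 0 with h | h
  · rw [max_eq_left h]; norm_num
  · rw [max_eq_right h.le]; exact min_le_left _ _
lemma thetaf_zero (εf : ℝ → ℝ) (ξ : ℝ) : thetaf εf ξ 0 = 1 := by
  simp [thetaf]

def Vf (εf mf : ℝ → ℝ) (t ξ z : ℝ) : ℝ := clamp01 t * (mf ξ * thetaf εf ξ z)

lemma Vf_nonneg (εf mf : ℝ → ℝ) (hm0 : ∀ ξ, 0 ≤ mf ξ) (t ξ z : ℝ) : 0 ≤ Vf εf mf t ξ z :=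
  mul_nonneg (clamp01_nonneg t) (mul_nonneg (hm0 ξ) (thetaf_nonneg εf ξ z))

lemma Vf_le (εf mf : ℝ → ℝ) (hm0 : ∀ ξ, 0 ≤ mf ξ) (t ξ z : ℝ) : Vf εf mf t ξ z ≤ mf ξ := by
  have h1 : Vf εf mf t ξ z ≤ 1 * (mf ξ * 1) := by
    apply mul_le_mul (clamp01_le_one t) _ (mul_nonneg (hm0 ξ) (thetaf_nonneg εf ξ z)) one_pos.le
    exact mul_le_mul_of_nonneg_left (thetaf_le_one εf ξ z) (hm0 ξ)
  linarith

lemma Vf_zero_of (εf mf : ℝ → ℝ) (hm : mf ξ₀ = 0) (t z : ℝ) : Vf εf mf t ξ₀ z = 0 := by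
  simp [Vf, hm]

def moveMap (εf mf : ℝ → ℝ) (t : ℝ) (q : R3) : R3 :=
  ![q 0, pushF (-(εf (q 0))) (Vf εf mf t (q 0) (q 2)) (mf (q 0) + εf (q 0)) (q 1), q 2]

def moveMapInv (εf mf : ℝ → ℝ) (t : ℝ) (q : R3) : R3 :=
  ![q 0, pushG (-(εf (q 0))) (Vf εf mf t (q 0) (q 2)) (mf (q 0) + εf (q 0)) (q 1), q 2]

section withHyps
variable {εf mf : ℝ → ℝ}
variable (hε0 : ∀ ξ, 0 ≤ εf ξ) (hm0 : ∀ ξ, 0 ≤ mf ξ) (hdm : ∀ ξ, 0 < mf ξ → 0 < εf ξ)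

include hε0 hm0 hdm in
lemma moveMapInv_moveMap (t : ℝ) (q : R3) :
    moveMapInv εf mf t (moveMap εf mf t q) = q := by
  rcases eq_or_lt_of_le (hε0 (q 0)) with hε | hε
  · have hm : mf (q 0) = 0 := by
      by_contra hne
      have := hdm (q 0) (lt_of_le_of_ne (hm0 (q 0)) (Ne.symm hne))
      rw [← hε] at this; exact lt_irrefl _ this
    have hV : Vf εf mf t (q 0) (q 2) = 0 := Vf_zero_of εf mf hm t (q 2)
    funext i
    fin_cases i <;> simp [moveMap, moveMapInv, hV, pushF_zero, pushG_zero]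
  · have ha : -(εf (q 0)) < 0 := by linarith
    have hv : 0 ≤ Vf εf mf t (q 0) (q 2) := Vf_nonneg εf mf hm0 t (q 0) (q 2)
    have hvb : Vf εf mf t (q 0) (q 2) < mf (q 0) + εf (q 0) := by
      have := Vf_le εf mf hm0 t (q 0) (q 2); linarith
    funext i
    fin_cases i <;>
      simp [moveMap, moveMapInv, pushG_pushF ha hv hvb]

include hε0 hm0 hdm in
lemma moveMap_moveMapInv (t : ℝ) (q : R3) :
    moveMap εf mf t (moveMapInv εf mf t q) = q := by
  rcases eq_or_lt_of_le (hε0 (q 0)) with hε | hε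
  · have hm : mf (q 0) = 0 := by
      by_contra hne
      have := hdm (q 0) (lt_of_le_of_ne (hm0 (q 0)) (Ne.symm hne))
      rw [← hε] at this; exact lt_irrefl _ this
    have hV : Vf εf mf t (q 0) (q 2) = 0 := Vf_zero_of εf mf hm t (q 2)
    funext i
    fin_cases i <;> simp [moveMap, moveMapInv, hV, pushF_zero, pushG_zero]
  · have ha : -(εf (q 0)) < 0 := by linarith
    have hv : 0 ≤ Vf εf mf t (q 0) (q 2) := Vf_nonneg εf mf hm0 t (q 0) (q 2)
    have hvb : Vf εf mf t (q 0) (q 2) < mf (q 0) + εf (q 0) := by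
      have := Vf_le εf mf hm0 t (q 0) (q 2); linarith
    funext i
    fin_cases i <;>
      simp [moveMap, moveMapInv, pushF_pushG ha hv hvb]

end withHyps

lemma moveMap_time_zero (εf mf : ℝ → ℝ) (q : R3) : moveMap εf mf 0 q = q := by
  have hV : Vf εf mf 0 (q 0) (q 2) = 0 := by simp [Vf, clamp01_zero]
  funext i
  fin_cases i <;> simp [moveMap, hV, pushF_zero]

section cont

lemma continuous_pushF_param {X : Type*} [TopologicalSpace X] {aF vF bF eF : X → ℝ}
    (hac : Continuous aF) (hvc : Continuous vF) (hbc : Continuous bF) (hec : Continuous eF)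
    (hgood : ∀ x, (aF x < 0 ∧ 0 < bF x) ∨ vF x = 0) :
    Continuous fun x => pushF (aF x) (vF x) (bF x) (eF x) := by
  rw [continuous_iff_continuousAt]
  intro x0
  rcases hgood x0 with ⟨ha, hb⟩ | hv0
  · apply hec.continuousAt.add
    apply hvc.continuousAt.mul
    unfold tentF
    have hout : Continuous fun p : ℝ × ℝ => max 0 (min 1 (min p.1 p.2)) :=
      continuous_const.max (continuous_const.min (continuous_fst.min continuous_snd))
    have hd1 : ContinuousAt (fun x => (eF x - aF x) / (-aF x)) x0 :=
      (hec.continuousAt.sub hac.continuousAt).div hac.continuousAt.neg (by simpa using ha.ne)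
    have hd2 : ContinuousAt (fun x => (bF x - eF x) / bF x) x0 :=
      (hbc.continuousAt.sub hec.continuousAt).div hbc.continuousAt (ne_of_gt hb)
    exact hout.continuousAt.comp (hd1.prodMk hd2)
  · have hval : pushF (aF x0) (vF x0) (bF x0) (eF x0) = eF x0 := by
      rw [hv0]; exact pushF_zero _ _ _
    show Filter.Tendsto (fun x => pushF (aF x) (vF x) (bF x) (eF x)) (𝓝 x0)
      (𝓝 (pushF (aF x0) (vF x0) (bF x0) (eF x0)))
    rw [hval]
    have h1 : Tendsto (fun x => vF x * tentF (aF x) (bF x) (eF x)) (𝓝 x0) (𝓝 0) := by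
      apply squeeze_zero_norm (a := fun x => |vF x|)
      · intro x
        rw [Real.norm_eq_abs, abs_mul]
        have : |tentF (aF x) (bF x) (eF x)| ≤ 1 := by
          rw [abs_of_nonneg (tentF_nonneg _ _ _)]; exact tentF_le_one _ _ _
        nlinarith [abs_nonneg (vF x), abs_nonneg (tentF (aF x) (bF x) (eF x))]
      · have := (hvc.tendsto x0).abs
        rwa [hv0, abs_zero] at this
    have h2 := (hec.tendsto x0).add h1
    rw [add_zero] at h2
    exact h2

lemma continuous_pushG_param {X : Type*} [TopologicalSpace X] {aF vF bF eF : X → ℝ}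
    (hac : Continuous aF) (hvc : Continuous vF) (hbc : Continuous bF) (hec : Continuous eF)
    (hgood : ∀ x, (aF x < vF x ∧ vF x < bF x) ∨ vF x = 0) :
    Continuous fun x => pushG (aF x) (vF x) (bF x) (eF x) := by
  rw [continuous_iff_continuousAt]
  intro x0
  rcases hgood x0 with ⟨ha, hb⟩ | hv0
  · apply hec.continuousAt.sub
    apply hvc.continuousAt.mul
    unfold tentG
    have hout : Continuous fun p : ℝ × ℝ => max 0 (min 1 (min p.1 p.2)) :=
      continuous_const.max (continuous_const.min (continuous_fst.min continuous_snd))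
    have hd1 : ContinuousAt (fun x => (eF x - aF x) / (vF x - aF x)) x0 :=
      (hec.continuousAt.sub hac.continuousAt).div
        (hvc.continuousAt.sub hac.continuousAt) (ne_of_gt (by linarith))
    have hd2 : ContinuousAt (fun x => (bF x - eF x) / (bF x - vF x)) x0 :=
      (hbc.continuousAt.sub hec.continuousAt).div
        (hbc.continuousAt.sub hvc.continuousAt) (ne_of_gt (by linarith))
    exact hout.continuousAt.comp (hd1.prodMk hd2)
  · have hval : pushG (aF x0) (vF x0) (bF x0) (eF x0) = eF x0 := by
      rw [hv0]; exact pushG_zero _ _ _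
    show Filter.Tendsto (fun x => pushG (aF x) (vF x) (bF x) (eF x)) (𝓝 x0)
      (𝓝 (pushG (aF x0) (vF x0) (bF x0) (eF x0)))
    rw [hval]
    have h1 : Tendsto (fun x => vF x * tentG (aF x) (vF x) (bF x) (eF x)) (𝓝 x0) (𝓝 0) := by
      apply squeeze_zero_norm (a := fun x => |vF x|)
      · intro x
        rw [Real.norm_eq_abs, abs_mul]
        have : |tentG (aF x) (vF x) (bF x) (eF x)| ≤ 1 := by
          rw [abs_of_nonneg (tentG_nonneg _ _ _ _)]; exact tentG_le_one _ _ _ _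
        nlinarith [abs_nonneg (vF x), abs_nonneg (tentG (aF x) (vF x) (bF x) (eF x))]
      · have := (hvc.tendsto x0).abs
        rwa [hv0, abs_zero] at this
    have h2 := (hec.tendsto x0).sub h1
    rw [sub_zero] at h2
    exact h2

variable {εf mf : ℝ → ℝ}
variable (hε0 : ∀ ξ, 0 ≤ εf ξ) (hm0 : ∀ ξ, 0 ≤ mf ξ) (hdm : ∀ ξ, 0 < mf ξ → 0 < εf ξ)
variable (hεc : Continuous εf) (hmc : Continuous mf)

include hε0 hm0 hdm hεc hmc in
lemma continuous_Vf_param {X : Type*} [TopologicalSpace X] {tF ξF zF : X → ℝ}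
    (htc : Continuous tF) (hξc : Continuous ξF) (hzc : Continuous zF) :
    Continuous fun x => Vf εf mf (tF x) (ξF x) (zF x) := by
  rw [continuous_iff_continuousAt]
  intro x0
  rcases eq_or_lt_of_le (hε0 (ξF x0)) with hε | hε
  · have hm : mf (ξF x0) = 0 := by
      by_contra hne
      have := hdm (ξF x0) (lt_of_le_of_ne (hm0 (ξF x0)) (Ne.symm hne))
      rw [← hε] at this; exact lt_irrefl _ this
    have hval : Vf εf mf (tF x0) (ξF x0) (zF x0) = 0 := Vf_zero_of εf mf hm _ _
    show Filter.Tendsto (fun x => Vf εf mf (tF x) (ξF x) (zF x)) (𝓝 x0)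
      (𝓝 (Vf εf mf (tF x0) (ξF x0) (zF x0)))
    rw [hval]
    apply squeeze_zero_norm (a := fun x => |mf (ξF x)|)
    · intro x
      rw [Real.norm_eq_abs]
      have h1 : 0 ≤ Vf εf mf (tF x) (ξF x) (zF x) := Vf_nonneg εf mf hm0 _ _ _
      have h2 : Vf εf mf (tF x) (ξF x) (zF x) ≤ mf (ξF x) := Vf_le εf mf hm0 _ _ _
      rw [abs_of_nonneg h1]
      exact h2.trans (le_abs_self _)
    · have h9 := ((hmc.comp hξc).tendsto x0).abs
      simp only [Function.comp_apply] at h9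
      rwa [hm, abs_zero] at h9
  · unfold Vf thetaf
    apply (continuous_clamp01.comp htc).continuousAt.mul
    apply ((hmc.comp hξc).continuousAt).mul
    have hout : Continuous fun x : ℝ => max 0 (min 1 (2 - x)) :=
      continuous_const.max (continuous_const.min (continuous_const.sub continuous_id))
    have hd : ContinuousAt (fun x => 2 * |zF x| / εf (ξF x)) x0 :=
      ((continuous_const.mul hzc.abs).continuousAt).div ((hεc.comp hξc).continuousAt) (ne_of_gt hε)
    exact hout.continuousAt.comp hd

include hε0 hm0 hdm hεc hmc in
lemma continuous_moveMap_uncurried :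
    Continuous fun p : ℝ × R3 => moveMap εf mf p.1 p.2 := by
  have h0 : Continuous fun p : ℝ × R3 => p.2 0 := (continuous_apply 0).comp continuous_snd
  have h1 : Continuous fun p : ℝ × R3 => p.2 1 := (continuous_apply 1).comp continuous_snd
  have h2 : Continuous fun p : ℝ × R3 => p.2 2 := (continuous_apply 2).comp continuous_snd
  have hV : Continuous fun p : ℝ × R3 => Vf εf mf p.1 (p.2 0) (p.2 2) :=
    continuous_Vf_param hε0 hm0 hdm hεc hmc continuous_fst h0 h2
  have haC : Continuous fun p : ℝ × R3 => -(εf (p.2 0)) := (hεc.comp h0).neg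
  have hbC : Continuous fun p : ℝ × R3 => mf (p.2 0) + εf (p.2 0) :=
    (hmc.comp h0).add (hεc.comp h0)
  apply continuous_pi
  intro i
  fin_cases i
  · simpa [moveMap] using h0
  · show Continuous fun p : ℝ × R3 =>
      pushF (-(εf (p.2 0))) (Vf εf mf p.1 (p.2 0) (p.2 2)) (mf (p.2 0) + εf (p.2 0)) (p.2 1)
    apply continuous_pushF_param haC hV hbC h1
    intro p
    rcases eq_or_lt_of_le (hε0 (p.2 0)) with hε | hε
    · right
      have hm : mf (p.2 0) = 0 := by
        by_contra hne
        have := hdm (p.2 0) (lt_of_le_of_ne (hm0 (p.2 0)) (Ne.symm hne))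
        rw [← hε] at this; exact lt_irrefl _ this
      exact Vf_zero_of εf mf hm _ _
    · left
      constructor
      · linarith
      · have := hm0 (p.2 0); linarith
  · simpa [moveMap] using h2

include hε0 hm0 hdm hεc hmc in
lemma continuous_moveMapInv_uncurried :
    Continuous fun p : ℝ × R3 => moveMapInv εf mf p.1 p.2 := by
  have h0 : Continuous fun p : ℝ × R3 => p.2 0 := (continuous_apply 0).comp continuous_snd
  have h1 : Continuous fun p : ℝ × R3 => p.2 1 := (continuous_apply 1).comp continuous_snd
  have h2 : Continuous fun p : ℝ × R3 => p.2 2 := (continuous_apply 2).comp continuous_snd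
  have hV : Continuous fun p : ℝ × R3 => Vf εf mf p.1 (p.2 0) (p.2 2) :=
    continuous_Vf_param hε0 hm0 hdm hεc hmc continuous_fst h0 h2
  have haC : Continuous fun p : ℝ × R3 => -(εf (p.2 0)) := (hεc.comp h0).neg
  have hbC : Continuous fun p : ℝ × R3 => mf (p.2 0) + εf (p.2 0) :=
    (hmc.comp h0).add (hεc.comp h0)
  apply continuous_pi
  intro i
  fin_cases i
  · simpa [moveMapInv] using h0
  · show Continuous fun p : ℝ × R3 =>
      pushG (-(εf (p.2 0))) (Vf εf mf p.1 (p.2 0) (p.2 2)) (mf (p.2 0) + εf (p.2 0)) (p.2 1)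
    apply continuous_pushG_param haC hV hbC h1
    intro p
    rcases eq_or_lt_of_le (hε0 (p.2 0)) with hε | hε
    · right
      have hm : mf (p.2 0) = 0 := by
        by_contra hne
        have := hdm (p.2 0) (lt_of_le_of_ne (hm0 (p.2 0)) (Ne.symm hne))
        rw [← hε] at this; exact lt_irrefl _ this
      exact Vf_zero_of εf mf hm _ _
    · left
      have hVnn : 0 ≤ Vf εf mf p.1 (p.2 0) (p.2 2) := Vf_nonneg εf mf hm0 _ _ _
      have hVle : Vf εf mf p.1 (p.2 0) (p.2 2) ≤ mf (p.2 0) := Vf_le εf mf hm0 _ _ _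
      constructor
      · linarith
      · linarith
  · simpa [moveMapInv] using h2

end cont

section structural
variable {εf mf : ℝ → ℝ}
variable (hε0 : ∀ ξ, 0 ≤ εf ξ) (hm0 : ∀ ξ, 0 ≤ mf ξ) (hdm : ∀ ξ, 0 < mf ξ → 0 < εf ξ)

include hm0 hdm in
lemma moveMap_eq_self_or_box (t : ℝ) (q : R3) :
    moveMap εf mf t q = q ∨
      (0 < mf (q 0) ∧ |q 2| < εf (q 0) ∧ -(εf (q 0)) < q 1 ∧ q 1 < mf (q 0) + εf (q 0)) := by
  by_cases hz :
      Vf εf mf t (q 0) (q 2) * tentF (-(εf (q 0))) (mf (q 0) + εf (q 0)) (q 1) = 0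
  · left
    funext i
    fin_cases i <;> simp [moveMap, pushF, hz]
  · right
    have hV : Vf εf mf t (q 0) (q 2) ≠ 0 := fun h => hz (by rw [h, zero_mul])
    have htent : tentF (-(εf (q 0))) (mf (q 0) + εf (q 0)) (q 1) ≠ 0 :=
      fun h => hz (by rw [h, mul_zero])
    -- positivity of m
    have hm : 0 < mf (q 0) := by
      rcases eq_or_lt_of_le (hm0 (q 0)) with h | h
      · exfalso; exact hV (by simp [Vf, ← h])
      · exact h
    have hε : 0 < εf (q 0) := hdm _ hm
    refine ⟨hm, ?_, ?_, ?_⟩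
    · -- |z| < ε from θ ≠ 0
      have hθ : thetaf εf (q 0) (q 2) ≠ 0 := by
        intro h; exact hV (by simp [Vf, h])
      have h1 : 0 < min 1 (2 - 2 * |q 2| / εf (q 0)) := by
        rcases lt_or_ge 0 (min 1 (2 - 2 * |q 2| / εf (q 0))) with h | h
        · exact h
        · exact absurd (max_eq_left h) hθ
      have h2 : 0 < 2 - 2 * |q 2| / εf (q 0) := lt_of_lt_of_le h1 (min_le_right _ _)
      rw [sub_pos, div_lt_iff₀ hε] at h2
      · linarith
    all_goals {
      have h1 : 0 < min 1 (min ((q 1 - -(εf (q 0))) / (- -(εf (q 0))))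
          ((mf (q 0) + εf (q 0) - q 1) / (mf (q 0) + εf (q 0)))) := by
        rcases lt_or_ge 0 (min 1 (min ((q 1 - -(εf (q 0))) / (- -(εf (q 0))))
            ((mf (q 0) + εf (q 0) - q 1) / (mf (q 0) + εf (q 0))))) with h | h
        · exact h
        · exact absurd (max_eq_left h) htent
      have hP : 0 < (q 1 - -(εf (q 0))) / (- -(εf (q 0))) :=
        lt_of_lt_of_le h1 ((min_le_right _ _).trans (min_le_left _ _))
      have hQ : 0 < (mf (q 0) + εf (q 0) - q 1) / (mf (q 0) + εf (q 0)) :=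
        lt_of_lt_of_le h1 ((min_le_right _ _).trans (min_le_right _ _))
      rw [div_pos_iff] at hP hQ
      rcases hP with ⟨hP1, hP2⟩ | ⟨hP1, hP2⟩ <;> rcases hQ with ⟨hQ1, hQ2⟩ | ⟨hQ1, hQ2⟩ <;>
        first
          | linarith
          | (exfalso; linarith) }

include hε0 hm0 hdm in
lemma moveMap_one_base (s : ℝ) :
    moveMap εf mf 1 ![s, 0, 0] = ![s, mf s, 0] := by
  have e0 : (![s, (0:ℝ), 0] : R3) 0 = s := rfl
  have e1 : (![s, (0:ℝ), 0] : R3) 1 = 0 := rfl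
  have e2 : (![s, (0:ℝ), 0] : R3) 2 = 0 := rfl
  have hθ : thetaf εf s 0 = 1 := thetaf_zero εf s
  have hV : Vf εf mf 1 s 0 = mf s := by
    rw [Vf, clamp01_one, hθ]; ring
  rcases eq_or_lt_of_le (hε0 s) with hε | hε
  · have hm : mf s = 0 := by
      by_contra hne
      have := hdm s (lt_of_le_of_ne (hm0 s) (Ne.symm hne))
      rw [← hε] at this; exact lt_irrefl _ this
    funext i
    fin_cases i <;>
      simp [moveMap, e0, e1, e2, hV, hm, pushF_zero]
  · have ha : -(εf s) < 0 := by linarith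
    have hb : 0 < mf s + εf s := by have := hm0 s; linarith
    have htent : tentF (-(εf s)) (mf s + εf s) 0 = 1 := by
      rw [tentF_left ha hb (by linarith) le_rfl]
      rw [zero_sub, neg_neg, div_self (ne_of_gt hε)]
    funext i
    fin_cases i <;>
      simp [moveMap, e0, e1, e2, hV, pushF, htent]

end structural

def linComb (u v w : R3) : R3 →ₗ[ℝ] R3 where
  toFun q := q 0 • u + q 1 • v + q 2 • w
  map_add' q r := by
    show (q + r) 0 • u + (q + r) 1 • v + (q + r) 2 • w = _
    simp only [Pi.add_apply]
    module
  map_smul' s q := by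
    show (s • q) 0 • u + (s • q) 1 • v + (s • q) 2 • w = _
    simp only [Pi.smul_apply, smul_eq_mul, RingHom.id_apply]
    module

lemma linComb_apply (u v w : R3) (q : R3) :
    linComb u v w q = q 0 • u + q 1 • v + q 2 • w := rfl

lemma linComb_injective {u v w : R3} (h : LinearIndependent ℝ ![u, v, w]) :
    Function.Injective (linComb u v w) := by
  intro q r hqr
  have hz : linComb u v w (q - r) = 0 := by
    rw [map_sub, hqr, sub_self]
  have hcoef := Fintype.linearIndependent_iff.mp h (q - r)
  have hsum : ∑ i, (q - r) i • ![u, v, w] i = 0 := by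
    rw [Fin.sum_univ_three]
    simpa [linComb_apply] using hz
  funext i
  have := hcoef hsum i
  exact sub_eq_zero.mp (by simpa using this)

def triangleHomeo (A u v w : R3) (h : LinearIndependent ℝ ![u, v, w]) : R3 ≃ₜ R3 :=
  ((LinearEquiv.ofBijective (linComb u v w)
    ⟨linComb_injective h, LinearMap.surjective_of_injective (linComb_injective h)⟩
    ).toContinuousLinearEquiv.toHomeomorph).trans (Homeomorph.addLeft A)

lemma triangleHomeo_apply (A u v w : R3) (h : LinearIndependent ℝ ![u, v, w]) (q : R3) :
    triangleHomeo A u v w h q = A + (q 0 • u + q 1 • v + q 2 • w) := rfl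

-- build the linear independence of (u, v - u/2, span-complement w)
lemma li_three {u v w : R3} (huv : LinearIndependent ℝ ![u, v])
    (hw : w ∉ Submodule.span ℝ {u, v}) :
    LinearIndependent ℝ ![u, v - (1/2 : ℝ) • u, w] := by
  rw [Fintype.linearIndependent_iff]
  intro g hg
  rw [Fin.sum_univ_three] at hg
  simp only [Matrix.cons_val_zero, Matrix.cons_val_one, Matrix.head_cons,
    Matrix.cons_val_two, Matrix.tail_cons] at hg
  -- hg : g 0 • u + g 1 • (v - (1/2) • u) + g 2 • w = 0
  have hg2 : g 2 = 0 := by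
    by_contra hne
    apply hw
    have h2 : g 2 • w = -((g 0 - g 1 / 2) • u + g 1 • v) := by
      linear_combination (norm := module) hg
    have h3 : w = (-(g 0 - g 1 / 2) / g 2) • u + (-(g 1) / g 2) • v := by
      have h4 : (g 2)⁻¹ • (g 2 • w) = w := by
        rw [smul_smul, inv_mul_cancel₀ hne, one_smul]
      rw [← h4, h2]
      match_scalars <;> field_simp <;> exact Or.inl (by ring)
    rw [h3]
    exact Submodule.add_mem _
      (Submodule.smul_mem _ _ (Submodule.subset_span (by simp)))
      (Submodule.smul_mem _ _ (Submodule.subset_span (by simp)))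
  rw [hg2, zero_smul, add_zero] at hg
  have := Fintype.linearIndependent_iff.mp huv ![g 0 - g 1 / 2, g 1] (by
    rw [Fin.sum_univ_two]
    simp only [Matrix.cons_val_zero, Matrix.cons_val_one, Matrix.head_cons]
    rw [← hg]; module)
  have h0 := this 0
  have h1 := this 1
  simp only [Matrix.cons_val_zero, Matrix.cons_val_one, Matrix.head_cons] at h0 h1
  intro i
  fin_cases i
  · simpa using by linarith
  · simpa using h1
  · simpa using hg2


/-- A triangle move on a rail arc (replacing the straight segment `[A,B]` of the arc by the
two sides `[A,C] ∪ [C,B]` of a triangle `T = conv{A,B,C}` meeting the arc only in `[A,B]`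
and disjoint from the rails) is realized by a rail isotopy of `ℝ³`. -/
theorem triangle_move_is_rail_isotopy
    (ℓ1 ℓ2 : Set R3) (hrails : RailsPair ℓ1 ℓ2)
    (c c' : unitInterval → R3) (hc : RailArc ℓ1 ℓ2 c) (hc' : RailArc ℓ1 ℓ2 c')
    (a b : unitInterval) (ha : 0 < (a : ℝ)) (hab : (a : ℝ) < (b : ℝ)) (hb : (b : ℝ) < 1)
    (A B C : R3) (hA : A = c a) (hB : B = c b)
    (hseg : c '' {t : unitInterval | (a : ℝ) ≤ (t : ℝ) ∧ (t : ℝ) ≤ (b : ℝ)} = segment ℝ A B)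
    (hindep : AffineIndependent ℝ ![A, B, C])
    (T : Set R3) (hT : T = convexHull ℝ {A, B, C})
    (hTc : T ∩ Set.range c = segment ℝ A B)
    (hTrails : T ∩ (ℓ1 ∪ ℓ2) = ∅)
    (hfix : ∀ t : unitInterval, (t : ℝ) ∉ Set.Ioo (a : ℝ) (b : ℝ) → c' t = c t)
    (hseg' : c' '' {t : unitInterval | (a : ℝ) ≤ (t : ℝ) ∧ (t : ℝ) ≤ (b : ℝ)} =
      segment ℝ A C ∪ segment ℝ C B) :
    ∃ H : unitInterval → R3 → R3, RailIsotopy ℓ1 ℓ2 c c' H := by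
  classical
  obtain ⟨hc_cont, hc_inj, hc0, hc1, _⟩ := hc
  obtain ⟨hc'_cont, hc'_inj, hc'0, hc'1, _⟩ := hc'
  obtain ⟨⟨vd, hvd0, hdir1, hdir2⟩, hdisj, hne12⟩ := hrails
  -- linear independence of B - A, C - A
  have huv : LinearIndependent ℝ ![B - A, C - A] := by
    rw [Fintype.linearIndependent_iff]
    intro g hg
    rw [Fin.sum_univ_two] at hg
    simp only [Matrix.cons_val_zero, Matrix.cons_val_one, Matrix.head_cons] at hg
    have hai := affineIndependent_iff.mp hindep Finset.univ ![-(g 0) - g 1, g 0, g 1]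
      (by rw [Fin.sum_univ_three]; simp only [Matrix.cons_val_zero, Matrix.cons_val_one,
            Matrix.head_cons, Matrix.cons_val_two, Matrix.tail_cons]; ring)
      (by rw [Fin.sum_univ_three]
          simp only [Matrix.cons_val_zero, Matrix.cons_val_one, Matrix.head_cons,
            Matrix.cons_val_two, Matrix.tail_cons]
          linear_combination (norm := module) hg)
    intro i
    fin_cases i
    · have := hai 1 (Finset.mem_univ 1)
      simpa using this
    · have := hai 2 (Finset.mem_univ 2)
      simpa using this
  -- a vector outside the span
  have hspan : Submodule.span ℝ {B - A, C - A} ≠ ⊤ := by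
    have hcard : ({B - A, C - A} : Set R3).toFinset.card < Module.finrank ℝ R3 := by
      have h3 : Module.finrank ℝ R3 = 3 := Module.finrank_fin_fun ℝ
      have hle : ({B - A, C - A} : Set R3).toFinset.card ≤ 2 := by
        rw [Set.toFinset_insert]
        exact (Finset.card_insert_le _ _).trans (by simp)
      omega
    exact (span_lt_top_of_card_lt_finrank hcard).ne
  obtain ⟨w0, hw0⟩ : ∃ w0, w0 ∉ Submodule.span ℝ {B - A, C - A} := by
    by_contra hcon
    push_neg at hcon
    exact hspan (Submodule.eq_top_iff'.mpr hcon)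
  have li : LinearIndependent ℝ ![B - A, (C - A) - (1/2 : ℝ) • (B - A), w0] :=
    li_three huv hw0
  set E := triangleHomeo A (B - A) ((C - A) - (1/2 : ℝ) • (B - A)) w0 li with hEdef
  have hE3 : ∀ ξ η ζ : ℝ, E ![ξ, η, ζ] =
      A + (ξ • (B - A) + η • ((C - A) - (1/2 : ℝ) • (B - A)) + ζ • w0) := by
    intro ξ η ζ
    rw [hEdef, triangleHomeo_apply]
    norm_num
    rfl
  -- the roof profile function
  set mf : ℝ → ℝ := fun ξ => max 0 (min (2*ξ) (2 - 2*ξ)) with hmfdef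
  have hm0 : ∀ ξ, 0 ≤ mf ξ := fun ξ => le_max_left _ _
  have hmc : Continuous mf := by
    apply continuous_const.max
    exact (continuous_const.mul continuous_id).min
      (continuous_const.sub (continuous_const.mul continuous_id))
  have hm_pos : ∀ ξ : ℝ, 0 < mf ξ → 0 < ξ ∧ ξ < 1 := by
    intro ξ h
    have h2 : 0 < min (2*ξ) (2 - 2*ξ) := by
      rcases le_or_gt (min (2*ξ) (2 - 2*ξ)) 0 with hm | hm
      · rw [hmfdef] at h; simp only at h; rw [max_eq_left hm] at h; exact absurd h (lt_irrefl 0)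
      · exact hm
    constructor
    · have := lt_of_lt_of_le h2 (min_le_left _ _); linarith
    · have := lt_of_lt_of_le h2 (min_le_right _ _); linarith
  have hm_eval : ∀ ξ : ℝ, 0 < ξ → ξ < 1 → mf ξ = min (2*ξ) (2 - 2*ξ) := by
    intro ξ h1 h2
    rw [hmfdef]
    exact max_eq_right (le_min (by linarith) (by linarith))
  have hm_lip : ∀ x y : ℝ, |mf x - mf y| ≤ 2 * |x - y| := by
    intro x y
    have e1 : mf x = max (min (2*x) (2 - 2*x)) 0 := max_comm _ _
    have e2 : mf y = max (min (2*y) (2 - 2*y)) 0 := max_comm _ _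
    rw [e1, e2]
    calc |max (min (2*x) (2 - 2*x)) 0 - max (min (2*y) (2 - 2*y)) 0|
        ≤ |min (2*x) (2 - 2*x) - min (2*y) (2 - 2*y)| := abs_max_sub_max_le_abs _ _ _
      _ ≤ max |2*x - 2*y| |(2 - 2*x) - (2 - 2*y)| := abs_min_sub_min_le_max _ _ _ _
      _ ≤ 2 * |x - y| := by
          apply max_le
          · rw [show 2*x - 2*y = 2*(x - y) by ring, abs_mul]; norm_num
          · rw [show (2 - 2*x) - (2 - 2*y) = 2*(y - x) by ring, abs_mul, abs_sub_comm y x]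
            norm_num
  -- the obstacle set K
  set Klow := c '' {t : unitInterval | (t : ℝ) ≤ (a : ℝ)} with hKlowdef
  set Khigh := c '' {t : unitInterval | (b : ℝ) ≤ (t : ℝ)} with hKhighdef
  set K := (Klow ∪ Khigh) ∪ (ℓ1 ∪ ℓ2) with hKdef
  have hlineclosed : ∀ (vv : R3) (ℓ : Set R3), IsLineWithDir vv ℓ → IsClosed ℓ := by
    rintro vv ℓ ⟨p, rfl⟩
    have heq : {x : R3 | ∃ t : ℝ, x = p + t • vv}
        = (fun y => p + y) '' ((Submodule.span ℝ {vv} : Submodule ℝ R3) : Set R3) := by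
      ext x
      constructor
      · rintro ⟨t, rfl⟩
        exact ⟨t • vv, Submodule.mem_span_singleton.mpr ⟨t, rfl⟩, rfl⟩
      · rintro ⟨y, hy, rfl⟩
        obtain ⟨t, rfl⟩ := Submodule.mem_span_singleton.mp hy
        exact ⟨t, rfl⟩
    rw [heq]
    exact (Homeomorph.addLeft p).isClosedMap _ (Submodule.closed_of_finiteDimensional _)
  have hKlow_cpt : IsCompact Klow := by
    apply IsCompact.image _ hc_cont
    exact (isClosed_le continuous_subtype_val continuous_const).isCompact
  have hKhigh_cpt : IsCompact Khigh := by
    apply IsCompact.image _ hc_cont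
    exact (isClosed_le continuous_const continuous_subtype_val).isCompact
  have hKc : IsClosed K := by
    rw [hKdef]
    exact ((hKlow_cpt.isClosed.union hKhigh_cpt.isClosed).union
      ((hlineclosed vd ℓ1 hdir1).union (hlineclosed vd ℓ2 hdir2)))
  -- segment membership characterization
  have hmemseg : ∀ t : unitInterval,
      c t ∈ segment ℝ A B ↔ ((a : ℝ) ≤ (t : ℝ) ∧ (t : ℝ) ≤ (b : ℝ)) := by
    intro t
    constructor
    · intro h
      rw [← hseg] at h
      obtain ⟨t', ht', heq⟩ := h
      have : t' = t := hc_inj heq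
      rwa [this] at ht'
    · intro h
      rw [← hseg]
      exact ⟨t, h, rfl⟩
  -- K meets T only at A and B
  have hKT : ∀ x, x ∈ K → x ∈ T → x = A ∨ x = B := by
    intro x hxK hxT
    rcases hxK with (hx | hx) | hx
    · obtain ⟨t, ht, rfl⟩ := hx
      have hxseg : c t ∈ segment ℝ A B := by
        rw [← hTc]; exact ⟨hxT, mem_range_self t⟩
      have hta := (hmemseg t).mp hxseg
      have : (t : ℝ) = (a : ℝ) := le_antisymm ht hta.1
      have hteq : t = a := Subtype.ext this
      left; rw [hteq, hA]
    · obtain ⟨t, ht, rfl⟩ := hx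
      have hxseg : c t ∈ segment ℝ A B := by
        rw [← hTc]; exact ⟨hxT, mem_range_self t⟩
      have hta := (hmemseg t).mp hxseg
      have : (t : ℝ) = (b : ℝ) := le_antisymm hta.2 ht
      have hteq : t = b := Subtype.ext this
      right; rw [hteq, hB]
    · exfalso
      have : x ∈ T ∩ (ℓ1 ∪ ℓ2) := ⟨hxT, hx⟩
      rw [hTrails] at this
      exact this
  -- fibers lie in T
  have hfibT : ∀ ξ η : ℝ, 0 < ξ → ξ < 1 → 0 ≤ η → η ≤ mf ξ → E ![ξ, η, 0] ∈ T := by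
    intro ξ η h1 h2 h3 h4
    rw [hm_eval ξ h1 h2] at h4
    have hη1 : η ≤ 2*ξ := h4.trans (min_le_left _ _)
    have hη2 : η ≤ 2 - 2*ξ := h4.trans (min_le_right _ _)
    rw [hT]
    have hconv : Convex ℝ (convexHull ℝ ({A, B, C} : Set R3)) := convex_convexHull ℝ _
    have hsum := hconv.sum_mem (t := (Finset.univ : Finset (Fin 3)))
      (w := ![1 - ξ - η/2, ξ - η/2, η]) (z := ![A, B, C])
      (by intro i _
          fin_cases i
          · show (0:ℝ) ≤ 1 - ξ - η/2; linarith
          · show (0:ℝ) ≤ ξ - η/2; linarith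
          · show (0:ℝ) ≤ η; linarith)
      (by rw [Fin.sum_univ_three]
          show (1 - ξ - η/2) + (ξ - η/2) + η = 1
          ring)
      (by intro i _
          fin_cases i
          · exact subset_convexHull ℝ _ (show A ∈ ({A, B, C} : Set R3) by simp)
          · exact subset_convexHull ℝ _ (show B ∈ ({A, B, C} : Set R3) by simp)
          · exact subset_convexHull ℝ _ (show C ∈ ({A, B, C} : Set R3) by simp))
    have heq : E ![ξ, η, 0] = ∑ i, ![1 - ξ - η/2, ξ - η/2, η] i • ![A, B, C] i := by
      rw [Fin.sum_univ_three, hE3]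
      show A + (ξ • (B - A) + η • ((C - A) - (1/2 : ℝ) • (B - A)) + (0:ℝ) • w0)
        = (1 - ξ - η/2) • A + (ξ - η/2) • B + η • C
      module
    rw [heq]; exact hsum
  have hEinj : Function.Injective E := E.injective
  have hfib_neA : ∀ ξ η : ℝ, 0 < ξ → E ![ξ, η, 0] ≠ A := by
    intro ξ η h1 hcon
    have hAeq : A = E ![0, 0, 0] := by rw [hE3]; module
    rw [hAeq] at hcon
    have := congrFun (hEinj hcon) 0
    simp at this
    linarith
  have hfib_neB : ∀ ξ η : ℝ, ξ < 1 → E ![ξ, η, 0] ≠ B := by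
    intro ξ η h1 hcon
    have hBeq : B = E ![1, 0, 0] := by rw [hE3]; module
    rw [hBeq] at hcon
    have := congrFun (hEinj hcon) 0
    simp at this
    linarith
  -- the preimage obstacle set
  set K' := E ⁻¹' K with hK'def
  have hK'c : IsClosed K' := hKc.preimage E.continuous
  have hK'ne : K'.Nonempty := by
    refine ⟨E.symm (c 0), ?_⟩
    rw [hK'def, mem_preimage, E.apply_symm_apply]
    exact Or.inr (Or.inl hc0)
  have hfib_notK' : ∀ ξ η : ℝ, 0 < ξ → ξ < 1 → 0 ≤ η → η ≤ mf ξ →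
      (![ξ, η, 0] : R3) ∉ K' := by
    intro ξ η h1 h2 h3 h4 hmem
    rcases hKT _ hmem (hfibT ξ η h1 h2 h3 h4) with h | h
    · exact hfib_neA ξ η h1 h
    · exact hfib_neB ξ η h2 h
  -- the pinch function
  set pin : ℝ → ℝ := fun ξ => sInf ((fun s => Metric.infDist (![ξ, s * mf ξ, 0] : R3) K') '' Icc (0:ℝ) 1)
    with hpindef
  have hbdd : ∀ ξ, BddBelow ((fun s => Metric.infDist (![ξ, s * mf ξ, 0] : R3) K') '' Icc (0:ℝ) 1) := by
    intro ξ
    refine ⟨0, ?_⟩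
    rintro y ⟨s, hs, rfl⟩
    exact Metric.infDist_nonneg
  have hne : ∀ ξ, ((fun s => Metric.infDist (![ξ, s * mf ξ, 0] : R3) K') '' Icc (0:ℝ) 1).Nonempty :=
    fun ξ => ⟨_, mem_image_of_mem _ (by norm_num : (0:ℝ) ∈ Icc (0:ℝ) 1)⟩
  have hpin_nonneg : ∀ ξ, 0 ≤ pin ξ := by
    intro ξ
    apply le_csInf (hne ξ)
    rintro y ⟨s, hs, rfl⟩
    exact Metric.infDist_nonneg
  have hpin_le : ∀ ξ s, s ∈ Icc (0:ℝ) 1 → pin ξ ≤ Metric.infDist (![ξ, s * mf ξ, 0] : R3) K' := by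
    intro ξ s hs
    exact csInf_le (hbdd ξ) (mem_image_of_mem _ hs)
  have hfibD_cont : ∀ ξ : ℝ, Continuous fun s : ℝ => Metric.infDist (![ξ, s * mf ξ, 0] : R3) K' := by
    intro ξ
    apply (Metric.continuous_infDist_pt K').comp
    apply continuous_pi
    intro i
    fin_cases i
    · exact continuous_const
    · show Continuous fun s : ℝ => s * mf ξ
      exact continuous_id.mul continuous_const
    · exact continuous_const
  have hpin_pos : ∀ ξ : ℝ, 0 < ξ → ξ < 1 → 0 < pin ξ := by
    intro ξ h1 h2
    obtain ⟨s0, hs0, hmin⟩ := isCompact_Icc.exists_isMinOn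
      (by norm_num : (Icc (0:ℝ) 1).Nonempty) (hfibD_cont ξ).continuousOn
    have hpt : (![ξ, s0 * mf ξ, 0] : R3) ∉ K' := by
      apply hfib_notK' ξ _ h1 h2
      · exact mul_nonneg hs0.1 (hm0 ξ)
      · calc s0 * mf ξ ≤ 1 * mf ξ := mul_le_mul_of_nonneg_right hs0.2 (hm0 ξ)
          _ = mf ξ := one_mul _
    have hdpos : 0 < Metric.infDist (![ξ, s0 * mf ξ, 0] : R3) K' := by
      have hz := (hK'c.mem_iff_infDist_zero hK'ne).not.mp hpt
      rcases (Metric.infDist_nonneg :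
        (0:ℝ) ≤ Metric.infDist (![ξ, s0 * mf ξ, 0] : R3) K').lt_or_eq with h | h
      · exact h
      · exact absurd h.symm hz
    apply lt_of_lt_of_le hdpos
    apply le_csInf (hne ξ)
    rintro y ⟨s, hs, rfl⟩
    exact hmin hs
  have hpin_lip : ∀ x y : ℝ, pin x ≤ pin y + 2 * |x - y| := by
    intro x y
    have key : ∀ s ∈ Icc (0:ℝ) 1,
        pin x - 2 * |x - y| ≤ Metric.infDist (![y, s * mf y, 0] : R3) K' := by
      intro s hs
      have h1 : pin x ≤ Metric.infDist (![x, s * mf x, 0] : R3) K' := hpin_le x s hs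
      have h2 : Metric.infDist (![x, s * mf x, 0] : R3) K'
          ≤ Metric.infDist (![y, s * mf y, 0] : R3) K'
            + dist (![x, s * mf x, 0] : R3) (![y, s * mf y, 0] : R3) :=
        Metric.infDist_le_infDist_add_dist
      have h3 : dist (![x, s * mf x, 0] : R3) (![y, s * mf y, 0] : R3) ≤ 2 * |x - y| := by
        apply (dist_pi_le_iff (by positivity)).mpr
        intro i
        fin_cases i
        · show dist x y ≤ 2 * |x - y|
          rw [Real.dist_eq]
          nlinarith [abs_nonneg (x - y)]
        · show dist (s * mf x) (s * mf y) ≤ 2 * |x - y|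
          rw [Real.dist_eq]
          have habs : |s * mf x - s * mf y| = |s| * |mf x - mf y| := by
            rw [← abs_mul]; ring_nf
          rw [habs, abs_of_nonneg hs.1]
          calc s * |mf x - mf y| ≤ 1 * |mf x - mf y| :=
                mul_le_mul_of_nonneg_right hs.2 (abs_nonneg _)
            _ = |mf x - mf y| := one_mul _
            _ ≤ 2 * |x - y| := hm_lip x y
        · show dist (0:ℝ) 0 ≤ 2 * |x - y|
          rw [dist_self]
          positivity
      linarith
    have h4 : pin x - 2 * |x - y| ≤ pin y := by
      apply le_csInf (hne y)
      rintro z ⟨s, hs, rfl⟩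
      exact key s hs
    linarith
  have hpin_cont : Continuous pin := by
    have : LipschitzWith 2 pin := by
      apply LipschitzWith.of_dist_le_mul
      intro x y
      rw [Real.dist_eq, Real.dist_eq]
      have h1 := hpin_lip x y
      have h2 := hpin_lip y x
      rw [abs_sub_comm y x] at h2
      rw [abs_sub_le_iff]
      constructor <;> [skip; skip] <;> push_cast <;> linarith
    exact this.continuous
  -- the pinch width
  set εf : ℝ → ℝ := fun ξ => pin ξ / 2 with hεfdef
  have hε0 : ∀ ξ, 0 ≤ εf ξ := fun ξ => by
    rw [hεfdef]; have := hpin_nonneg ξ; positivity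
  have hεc : Continuous εf := hpin_cont.div_const 2
  have hdm : ∀ ξ, 0 < mf ξ → 0 < εf ξ := by
    intro ξ h
    obtain ⟨h1, h2⟩ := hm_pos ξ h
    have := hpin_pos ξ h1 h2
    rw [hεfdef]
    positivity
  -- the key fixed-point property
  have hfixkey : ∀ (t : ℝ) (q : R3), E q ∈ K → moveMap εf mf t q = q := by
    intro t q hqK
    rcases moveMap_eq_self_or_box hm0 hdm t q with h | hbox
    · exact h
    exfalso
    obtain ⟨hbm, hbz, hb1, hb2⟩ := hbox
    obtain ⟨hξ0, hξ1⟩ := hm_pos _ hbm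
    have hpinq : 0 < pin (q 0) := hpin_pos _ hξ0 hξ1
    have hεpos : 0 < εf (q 0) := hdm _ hbm
    have hεlt : εf (q 0) < pin (q 0) := by rw [hεfdef]; simp only; linarith
    set clv := max 0 (min (mf (q 0)) (q 1)) with hclvdef
    have hclv0 : 0 ≤ clv := le_max_left _ _
    have hclvm : clv ≤ mf (q 0) := by
      rw [hclvdef]
      rcases le_or_gt (min (mf (q 0)) (q 1)) 0 with h | h
      · rw [max_eq_left h]; exact hm0 _
      · rw [max_eq_right h.le]; exact min_le_left _ _
    have hs : clv / mf (q 0) ∈ Icc (0:ℝ) 1 :=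
      ⟨div_nonneg hclv0 hbm.le, (div_le_one hbm).mpr hclvm⟩
    have hsm : clv / mf (q 0) * mf (q 0) = clv := div_mul_cancel₀ clv hbm.ne'
    have h1 : pin (q 0) ≤ Metric.infDist (![q 0, clv, 0] : R3) K' := by
      have := hpin_le (q 0) (clv / mf (q 0)) hs
      rwa [hsm] at this
    have hqK' : q ∈ K' := mem_preimage.mpr hqK
    have h2 : Metric.infDist (![q 0, clv, 0] : R3) K' ≤ dist (![q 0, clv, 0] : R3) q :=
      Metric.infDist_le_dist_of_mem hqK'
    have hclvq : |clv - q 1| < εf (q 0) := by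
      rcases le_or_gt (q 1) 0 with hq1 | hq1
      · have hc1 : clv = 0 := by
          rw [hclvdef, min_eq_right (hq1.trans (hm0 _)), max_eq_left hq1]
        rw [hc1, zero_sub, abs_neg, abs_of_nonpos hq1]
        linarith
      rcases le_or_gt (q 1) (mf (q 0)) with hq2 | hq2
      · have hc1 : clv = q 1 := by
          rw [hclvdef, min_eq_right hq2, max_eq_right hq1.le]
        rw [hc1, sub_self, abs_zero]
        exact hεpos
      · have hc1 : clv = mf (q 0) := by
          rw [hclvdef, min_eq_left hq2.le, max_eq_right (hm0 _)]
        rw [hc1, abs_of_nonpos (by linarith)]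
        linarith
    have h3 : dist (![q 0, clv, 0] : R3) q < pin (q 0) := by
      rw [dist_pi_lt_iff hpinq]
      intro i
      fin_cases i
      · show dist (q 0) (q 0) < pin (q 0)
        rw [dist_self]
        exact hpinq
      · show dist clv (q 1) < pin (q 0)
        rw [Real.dist_eq]
        exact hclvq.trans hεlt
      · show dist (0:ℝ) (q 2) < pin (q 0)
        rw [Real.dist_eq, zero_sub, abs_neg]
        exact hbz.trans hεlt
    linarith [h1.trans (h2.trans h3.le)]
  -- membership of rails and tails in K
  have hrailsK : ∀ p, p ∈ ℓ1 ∪ ℓ2 → p ∈ K := fun p hp => Or.inr hp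
  -- the isotopy
  refine ⟨fun t p => E (moveMap εf mf (t : ℝ) (E.symm p)), ?_, ?_, ?_, ?_⟩
  · -- continuity
    show Continuous fun p : unitInterval × R3 => E (moveMap εf mf ((p.1 : ℝ)) (E.symm p.2))
    exact E.continuous.comp ((continuous_moveMap_uncurried hε0 hm0 hdm hεc hmc).comp
      ((continuous_subtype_val.comp continuous_fst).prodMk (E.symm.continuous.comp continuous_snd)))
  · -- time zero
    funext p
    show E (moveMap εf mf ((0 : unitInterval) : ℝ) (E.symm p)) = p
    rw [show ((0 : unitInterval) : ℝ) = 0 from rfl, moveMap_time_zero, E.apply_symm_apply]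
  · -- slices are homeomorphisms preserving the rails
    intro t
    have hfixed : ∀ ℓ : Set R3, ℓ ⊆ ℓ1 ∪ ℓ2 →
        (fun p => E (moveMap εf mf (t : ℝ) (E.symm p))) '' ℓ = ℓ := by
      intro ℓ hsub
      have heq : Set.EqOn (fun p => E (moveMap εf mf (t : ℝ) (E.symm p))) id ℓ := by
        intro p hp
        show E (moveMap εf mf (t : ℝ) (E.symm p)) = p
        rw [hfixkey (t : ℝ) (E.symm p)
          (by rw [E.apply_symm_apply]; exact hrailsK p (hsub hp)), E.apply_symm_apply]
      rw [heq.image_eq, image_id]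
    refine ⟨(E.symm.trans (⟨⟨moveMap εf mf (t : ℝ), moveMapInv εf mf (t : ℝ),
      moveMapInv_moveMap hε0 hm0 hdm (t : ℝ), moveMap_moveMapInv hε0 hm0 hdm (t : ℝ)⟩,
      (continuous_moveMap_uncurried hε0 hm0 hdm hεc hmc).comp
        (continuous_const.prodMk continuous_id),
      (continuous_moveMapInv_uncurried hε0 hm0 hdm hεc hmc).comp
        (continuous_const.prodMk continuous_id)⟩ : R3 ≃ₜ R3)).trans E, rfl, ?_, ?_⟩
    · exact hfixed ℓ1 subset_union_left
    · exact hfixed ℓ2 subset_union_right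
  · -- the time-one image
    have hco1 : ((1 : unitInterval) : ℝ) = 1 := rfl
    have hS : (univ : Set unitInterval) =
        {t : unitInterval | (t : ℝ) ≤ (a : ℝ)}
          ∪ {t : unitInterval | (a : ℝ) ≤ (t : ℝ) ∧ (t : ℝ) ≤ (b : ℝ)}
          ∪ {t : unitInterval | (b : ℝ) ≤ (t : ℝ)} := by
      ext t
      simp only [mem_univ, mem_union, mem_setOf_eq, true_iff]
      rcases le_total ((t : ℝ)) ((a : ℝ)) with h | h
      · exact Or.inl (Or.inl h)
      · rcases le_total ((t : ℝ)) ((b : ℝ)) with h2 | h2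
        · exact Or.inl (Or.inr ⟨h, h2⟩)
        · exact Or.inr h2
    have htails : ∀ S : Set unitInterval, c '' S ⊆ K →
        (fun p => E (moveMap εf mf ((1 : unitInterval) : ℝ) (E.symm p))) '' (c '' S) = c '' S := by
      intro S hsub
      have heq : Set.EqOn (fun p => E (moveMap εf mf ((1 : unitInterval) : ℝ) (E.symm p))) id
          (c '' S) := by
        intro p hp
        show E (moveMap εf mf _ (E.symm p)) = p
        rw [hfixkey _ (E.symm p) (by rw [E.apply_symm_apply]; exact hsub hp),
          E.apply_symm_apply]
      rw [heq.image_eq, image_id]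
    have hEbase : ∀ s : ℝ, E ![s, 0, 0] = A + s • (B - A) := by
      intro s; rw [hE3]; module
    have hsegE : segment ℝ A B = (fun s : ℝ => E ![s, 0, 0]) '' Icc (0:ℝ) 1 := by
      rw [segment_eq_image' ℝ A B]
      exact image_congr fun s _ => (hEbase s).symm
    have hmid : (fun p => E (moveMap εf mf ((1 : unitInterval) : ℝ) (E.symm p))) '' segment ℝ A B
        = segment ℝ A C ∪ segment ℝ C B := by
      rw [hsegE, ← image_comp]
      have hcomp : ((fun p => E (moveMap εf mf ((1 : unitInterval) : ℝ) (E.symm p)))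
          ∘ fun s : ℝ => E ![s, 0, 0]) = fun s : ℝ => E ![s, mf s, 0] := by
        funext s
        show E (moveMap εf mf ((1 : unitInterval) : ℝ) (E.symm (E ![s, 0, 0]))) = E ![s, mf s, 0]
        rw [E.symm_apply_apply, hco1, moveMap_one_base hε0 hm0 hdm]
      rw [hcomp]
      apply Subset.antisymm
      · rintro x ⟨s, ⟨hs0, hs1⟩, rfl⟩
        rcases le_total s (1/2 : ℝ) with hhalf | hhalf
        · left
          rw [segment_eq_image' ℝ A C]
          refine ⟨2*s, ⟨by linarith, by linarith⟩, ?_⟩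
          have hmval : mf s = 2*s := by
            show max 0 (min (2*s) (2 - 2*s)) = 2*s
            rw [min_eq_left (by linarith), max_eq_right (by linarith)]
          show A + (2*s) • (C - A) = E ![s, mf s, 0]
          rw [hmval, hE3]; module
        · right
          rw [segment_eq_image' ℝ C B]
          refine ⟨2*s - 1, ⟨by linarith, by linarith⟩, ?_⟩
          have hmval : mf s = 2 - 2*s := by
            show max 0 (min (2*s) (2 - 2*s)) = 2 - 2*s
            rw [min_eq_right (by linarith), max_eq_right (by linarith)]
          show C + (2*s - 1) • (B - C) = E ![s, mf s, 0]
          rw [hmval, hE3]; module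
      · rintro x (hx | hx)
        · rw [segment_eq_image' ℝ A C] at hx
          obtain ⟨θ, ⟨hθ0, hθ1⟩, rfl⟩ := hx
          refine ⟨θ/2, ⟨by linarith, by linarith⟩, ?_⟩
          have hmval : mf (θ/2) = θ := by
            show max 0 (min (2*(θ/2)) (2 - 2*(θ/2))) = θ
            rw [show 2*(θ/2) = θ by ring]
            rw [min_eq_left (by linarith), max_eq_right (by linarith)]
          show E ![θ/2, mf (θ/2), 0] = A + θ • (C - A)
          rw [hmval, hE3]; module
        · rw [segment_eq_image' ℝ C B] at hx
          obtain ⟨θ, ⟨hθ0, hθ1⟩, rfl⟩ := hx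
          refine ⟨(1+θ)/2, ⟨by linarith, by linarith⟩, ?_⟩
          have hmval : mf ((1+θ)/2) = 1 - θ := by
            show max 0 (min (2*((1+θ)/2)) (2 - 2*((1+θ)/2))) = 1 - θ
            rw [show 2*((1+θ)/2) = 1 + θ by ring, show 2 - (1+θ) = 1 - θ by ring]
            rw [min_eq_right (by linarith), max_eq_right (by linarith)]
          show E ![(1+θ)/2, mf ((1+θ)/2), 0] = C + θ • (B - C)
          rw [hmval, hE3]; module
    show (fun p => E (moveMap εf mf ((1 : unitInterval) : ℝ) (E.symm p))) '' (range c) = range c'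
    rw [← image_univ, ← image_univ (f := c'), hS]
    rw [image_union, image_union, image_union, image_union, image_union, image_union]
    rw [hseg, hseg']
    rw [htails _ (fun x hx => Or.inl (Or.inl hx)), htails _ (fun x hx => Or.inl (Or.inr hx))]
    rw [hmid]
    congr 1
    congr 1
    · exact (image_congr fun t ht => hfix t (fun hmem => absurd hmem.1 (not_lt.mpr ht))).symm
    · exact (image_congr fun t ht => hfix t (fun hmem => absurd hmem.2 (not_lt.mpr ht))).symm
end
end

section
/- Let c be a rail arc and let 0 < a < 1 with A = c(0) ∈ ℓ1, B = c(a), and suppose c([0,a]) = [A,B]. Let C ∈ ℓ1 be a point such that A, B, C are affinely independent and the closed triangle T = convexHull{A,B,C} satisfies T ∩ c([0,1]) = [A,B] and T ∩ (ℓ1 ∪ ℓ2) = [A,C]. Let c' be a rail arc with c'(t) = c(t) for all t ∈ [a,1], c'(0) = C, and c'([0,a]) = [C,B]. Then there exists a rail isotopy taking c onto c' (i.e. every space slide move on a rail arc, sliding its endpoint along a rail, is realized by a rail isotopy of ℝ³). -/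
open Set unitInterval Function

noncomputable section

/-!
The isotopy is a shear `H s x = x + (s * λ x) • u` along the direction `u = C - A` of the rails,
so every slice maps each rail onto itself. A slice is a homeomorphism as soon as `λ` is
continuous, bounded and every `t ↦ t + λ (x + t • u)` is strictly increasing; `H 1` carries the
arc `c` onto `c'` if `λ (A + θ • (B - A)) = 1 - θ` and `λ` vanishes on the tail `K = c [a, 1]`.

Such a `λ` exists because, by the triangle condition, starting from `A + θ • (B - A)` and moving
along `u` one meets `K` only after a time `> 1 - θ`. By compactness this gap is recorded by a
continuous modulus `μ` of slope `< 1` in the time `τ`, and the distance to `K` by a continuous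
modulus `ν` vanishing at `0`. The infimum over `τ` of `μ τ + ν (infDist (x + τ • u) K)` then
inherits slope `> -1` along `u` from `μ`, is `≥ 1 - θ` on `[A, B]` and `≤ 0` on `K`.
-/

open Filter Topology Metric

section Shear

variable {E : Type*} [NormedAddCommGroup E] [NormedSpace ℝ E] {u : E} {f g : E → ℝ}

/-- Every `t ↦ t + f (x + t • u)` is strictly increasing. -/
def ShearAdmissible (u : E) (f : E → ℝ) : Prop :=
  ∀ x (τ : ℝ), 0 < τ → f x < f (x + τ • u) + τ

theorem ShearAdmissible.min (hf : ShearAdmissible u f) (hg : ShearAdmissible u g) :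
    ShearAdmissible u fun x => min (f x) (g x) := fun x τ hτ => by
  dsimp only
  rw [← min_add_add_right]
  exact lt_min ((min_le_left _ _).trans_lt (hf x τ hτ)) ((min_le_right _ _).trans_lt (hg x τ hτ))

theorem ShearAdmissible.max (hf : ShearAdmissible u f) (hg : ShearAdmissible u g) :
    ShearAdmissible u fun x => max (f x) (g x) := fun x τ hτ => by
  dsimp only
  rw [← max_add_add_right]
  exact max_lt ((hf x τ hτ).trans_le (le_max_left _ _)) ((hg x τ hτ).trans_le (le_max_right _ _))

theorem shearAdmissible_of_forall_add_smul_eq (hf : ∀ x (τ : ℝ), f (x + τ • u) = f x) :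
    ShearAdmissible u f := fun x τ hτ => by linarith [hf x τ]

theorem ShearAdmissible.const_mul (hf : ShearAdmissible u f) {s : ℝ} (hs₀ : 0 ≤ s)
    (hs₁ : s ≤ 1) : ShearAdmissible u fun x => s * f x := fun x τ hτ => by
  dsimp only
  have h := hf x τ hτ
  rcases le_total (f x) (f (x + τ • u)) with h' | h'
  · nlinarith [mul_le_mul_of_nonneg_left h' hs₀]
  · nlinarith [mul_le_mul_of_nonneg_right hs₁ (sub_nonneg.2 h')]

theorem ShearAdmissible.injective (hf : ShearAdmissible u f) :
    Injective fun x => x + f x • u := by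
  have key : ∀ x y, x + f x • u = y + f y • u → f x ≤ f y := fun x y h => by
    by_contra! hlt
    have := hf x (f x - f y) (sub_pos.2 hlt)
    rw [show x + (f x - f y) • u = y by rw [sub_smul, ← add_sub_assoc, h, add_sub_cancel_right]]
      at this
    linarith
  intro x y h
  simpa [le_antisymm (key x y h) (key y x h.symm)] using h

theorem surjective_shear {M : ℝ} (hf : Continuous f) (hM : ∀ x, |f x| ≤ M) :
    Surjective fun x => x + f x • u := by
  intro y
  have hM₀ : 0 ≤ M := (abs_nonneg _).trans (hM y)
  obtain ⟨t, -, ht⟩ : (0 : ℝ) ∈ (fun t => t + f (y + t • u)) '' Icc (-M) M := by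
    refine intermediate_value_Icc (by linarith) (by fun_prop) ⟨?_, ?_⟩ <;>
      linarith [abs_le.mp (hM (y + (-M) • u)), abs_le.mp (hM (y + M • u))]
  refine ⟨y + t • u, ?_⟩
  simp only at ht ⊢
  rw [add_assoc, ← add_smul, ht, zero_smul, add_zero]

theorem isClosedMap_shear [ProperSpace E] {M : ℝ} (hf : Continuous f) (hM : ∀ x, |f x| ≤ M) :
    IsClosedMap fun x => x + f x • u := by
  refine (isProperMap_iff_tendsto_cocompact.mpr ⟨by fun_prop, ?_⟩).isClosedMap
  refine tendsto_cocompact_of_tendsto_dist_comp_atTop 0 ?_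
  refine tendsto_atTop_mono (fun x => ?_) (tendsto_atTop_add_const_right _ (-(M * ‖u‖))
    tendsto_norm_cocompact_atTop)
  rw [dist_zero_right]
  have := norm_sub_norm_le x (-(f x • u))
  rw [sub_neg_eq_add, norm_neg, norm_smul, Real.norm_eq_abs] at this
  nlinarith [hM x, norm_nonneg u]

theorem ShearAdmissible.exists_homeomorph [ProperSpace E] {M : ℝ} (hf : ShearAdmissible u f)
    (hfc : Continuous f) (hM : ∀ x, |f x| ≤ M) :
    ∃ φ : E ≃ₜ E, ⇑φ = fun x => x + f x • u :=
  ⟨(Equiv.ofBijective _ ⟨hf.injective, surjective_shear hfc hM⟩).toHomeomorphOfContinuousClosed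
    (show Continuous fun x => x + f x • u by fun_prop) (isClosedMap_shear hfc hM), rfl⟩

theorem ShearAdmissible.exists_homeomorph_const_mul [ProperSpace E] (hf : ShearAdmissible u f)
    (hfc : Continuous f) (hf₁ : ∀ x, |f x| ≤ 1) (s : I) :
    ∃ φ : E ≃ₜ E, ⇑φ = fun x => x + (s * f x) • u := by
  refine (hf.const_mul s.2.1 s.2.2).exists_homeomorph (by fun_prop) (M := 1) fun x => ?_
  rw [abs_mul]
  exact mul_le_one₀ (abs_le.mpr ⟨by linarith [s.2.1], s.2.2⟩) (abs_nonneg _) (hf₁ x)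

theorem image_shear_of_forall_add_smul_mem {L : Set E} (hsurj : Surjective fun x => x + f x • u)
    (hL : ∀ x ∈ L, ∀ r : ℝ, x + r • u ∈ L) : (fun x => x + f x • u) '' L = L := by
  refine (image_subset_iff.mpr fun x hx => hL x hx _).antisymm fun y hy => ?_
  obtain ⟨x, rfl⟩ := hsurj y
  refine ⟨x, ?_, rfl⟩
  simpa [add_assoc, ← add_smul] using hL _ hy (-f x)

end Shear

section Modulus

variable {X : Type*} {Q : Set X} {f d : X → ℝ} {q : X}

/-- When `d q = 0` the ramp vanishes identically, since `f q / 0 = 0`. -/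
def ramp (f d : X → ℝ) (q : X) (r : ℝ) : ℝ :=
  min (f q) (f q / d q * max r 0)

def modulus (Q : Set X) (f d : X → ℝ) (r : ℝ) : ℝ :=
  sSup ((fun q => ramp f d q r) '' Q)

theorem ramp_nonneg (hf : 0 ≤ f q) (hd : 0 ≤ d q) (r : ℝ) : 0 ≤ ramp f d q r :=
  le_min hf (by positivity)

theorem ramp_le (r : ℝ) : ramp f d q r ≤ f q := min_le_left _ _

theorem ramp_of_nonpos (hf : 0 ≤ f q) {r : ℝ} (hr : r ≤ 0) : ramp f d q r = 0 := by
  simp [ramp, max_eq_right hr, hf]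

theorem ramp_self (hd : 0 ≤ d q) (hfd : d q = 0 → f q = 0) : ramp f d q (d q) = f q := by
  rcases hd.eq_or_lt with h | h
  · simp [ramp, ← h, hfd h.symm]
  · simp [ramp, max_eq_left hd, div_mul_cancel₀ _ h.ne']

theorem ramp_le_add (hf : 0 ≤ f q) (hd : 0 ≤ d q) {a b : ℝ} (hab : a ≤ b) :
    ramp f d q b ≤ ramp f d q a + f q / d q * (b - a) := by
  have hs : 0 ≤ f q / d q := div_nonneg hf hd
  have hmax : max b 0 ≤ max a 0 + (b - a) := max_le (by linarith [le_max_left a 0])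
    (by linarith [le_max_right a 0])
  calc ramp f d q b ≤ min (f q + f q / d q * (b - a)) (f q / d q * max a 0 + f q / d q * (b - a)) :=
        min_le_min (by nlinarith) (by nlinarith)
    _ = ramp f d q a + f q / d q * (b - a) := min_add_add_right _ _ _

variable [TopologicalSpace X]

structure ModulusSetup (Q : Set X) (f d : X → ℝ) : Prop where
  isCompact : IsCompact Q
  continuous_f : Continuous f
  continuous_d : Continuous d
  f_nonneg : ∀ q ∈ Q, 0 ≤ f q
  d_nonneg : ∀ q ∈ Q, 0 ≤ d q
  f_eq_zero : ∀ q ∈ Q, d q = 0 → f q = 0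

namespace ModulusSetup

variable (h : ModulusSetup Q f d)
include h

theorem continuous_ramp : Continuous fun p : ℝ × Q => ramp f d p.2 p.1 := by
  refine continuous_iff_continuousAt.mpr fun ⟨r, q, hq⟩ => ?_
  by_cases hdq : d q = 0
  · have hfq := h.f_eq_zero q hq hdq
    have hlim : Tendsto (fun p : ℝ × Q => f p.2) (𝓝 (r, ⟨q, hq⟩)) (𝓝 0) := by
      rw [← hfq]; exact (h.continuous_f.comp (by fun_prop)).continuousAt
    simp only [ContinuousAt, ramp, hdq, hfq, div_zero, zero_mul, min_self]
    exact squeeze_zero (fun p => ramp_nonneg (h.f_nonneg _ p.2.2) (h.d_nonneg _ p.2.2) _)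
      (fun p => ramp_le _) hlim
  · have := h.continuous_f; have := h.continuous_d
    unfold ramp
    fun_prop (disch := exact hdq)

theorem bddAbove_ramp_image (r : ℝ) : BddAbove ((fun q => ramp f d q r) '' Q) := by
  obtain ⟨M, hM⟩ := h.isCompact.bddAbove_image h.continuous_f.continuousOn
  exact ⟨M, forall_mem_image.mpr fun q hq => (ramp_le r).trans (hM (mem_image_of_mem f hq))⟩

theorem modulus_nonneg (r : ℝ) : 0 ≤ modulus Q f d r :=
  Real.sSup_nonneg <| forall_mem_image.mpr fun q hq =>
    ramp_nonneg (h.f_nonneg q hq) (h.d_nonneg q hq) r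

theorem modulus_of_nonpos {r : ℝ} (hr : r ≤ 0) : modulus Q f d r = 0 :=
  (Real.sSup_nonpos <| forall_mem_image.mpr fun q hq =>
    (ramp_of_nonpos (h.f_nonneg q hq) hr).le).antisymm (h.modulus_nonneg r)

theorem le_modulus (hq : q ∈ Q) : f q ≤ modulus Q f d (d q) := by
  rw [← ramp_self (h.d_nonneg q hq) (h.f_eq_zero q hq)]
  exact le_csSup (h.bddAbove_ramp_image _) (mem_image_of_mem _ hq)

theorem continuous_modulus : Continuous (modulus Q f d) := by
  have : CompactSpace Q := isCompact_iff_compactSpace.mp h.isCompact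
  convert isCompact_univ.continuous_sSup (f := fun r (q : Q) => ramp f d q r) h.continuous_ramp
    using 2 with r
  rw [image_univ, modulus, ← image_univ, ← image_image (fun q => ramp f d q r) Subtype.val,
    image_univ, Subtype.range_coe]

/-- At `b` the envelope is attained by a single ramp, whose slope is `< 1`. -/
theorem modulus_lt_add (hlt : ∀ q ∈ Q, 0 < d q → f q < d q) {a b : ℝ} (hab : a < b) :
    modulus Q f d b < modulus Q f d a + (b - a) := by
  rcases Q.eq_empty_or_nonempty with hQ | hQ
  · simp [modulus, hQ, hab]
  obtain ⟨q, hq, hmax⟩ := h.isCompact.exists_sSup_image_eq hQ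
    (f := fun q => ramp f d q b) (continuousOn_iff_continuous_domRestrict.mpr
      (h.continuous_ramp.comp (continuous_const.prodMk continuous_id)))
  have hslope : f q / d q < 1 := by
    rcases (h.d_nonneg q hq).eq_or_lt with hd | hd
    · simp [← hd]
    · exact (div_lt_one hd).mpr (hlt q hq hd)
  calc modulus Q f d b = ramp f d q b := hmax
    _ ≤ ramp f d q a + f q / d q * (b - a) :=
        ramp_le_add (h.f_nonneg q hq) (h.d_nonneg q hq) hab.le
    _ < modulus Q f d a + (b - a) := by
        have : ramp f d q a ≤ modulus Q f d a :=
          le_csSup (h.bddAbove_ramp_image a) (mem_image_of_mem (fun q => ramp f d q a) hq)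
        nlinarith [mul_lt_mul_of_pos_right hslope (sub_pos.2 hab)]

end ModulusSetup

end Modulus

section Profile

variable {E : Type*} [NormedAddCommGroup E] [NormedSpace ℝ E]

/-- Hypotheses under which `slideProfile` below is a shear profile along `u` that equals `v`
on `S` and vanishes on `K`. -/
structure SlideSetup (u : E) (S K : Set E) (v : E → ℝ) : Prop where
  isCompact_S : IsCompact S
  isCompact_K : IsCompact K
  nonempty_K : K.Nonempty
  continuous_v : Continuous v
  v_add_smul : ∀ x (τ : ℝ), v (x + τ • u) = v x
  v_nonneg : ∀ p ∈ S, 0 ≤ v p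
  v_le_one : ∀ p ∈ S, v p ≤ 1
  gap : ∀ p ∈ S, ∀ τ : ℝ, 0 ≤ τ → p + τ • u ∈ K → v p = 0 ∨ v p < τ

variable (u : E) (S K : Set E) (v : E → ℝ)

/-- Times are capped at `2`: the term `τ / 2` of `alongModulus` makes later times irrelevant. -/
def hitPairs : Set (E × ℝ) :=
  S ×ˢ Icc (0 : ℝ) 2 ∩ (fun q => q.1 + q.2 • u) ⁻¹' K

def alongModulus (τ : ℝ) : ℝ :=
  max (τ / 2) (modulus (hitPairs u S K) (fun q => v q.1) Prod.snd τ)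

def acrossModulus : ℝ → ℝ :=
  modulus (S ×ˢ Icc (0 : ℝ) 2) (fun q => max (v q.1 - alongModulus u S K v q.2) 0)
    (fun q => infDist (q.1 + q.2 • u) K)

def slideCost (x : E) (τ : ℝ) : ℝ :=
  alongModulus u S K v τ + acrossModulus u S K v (infDist (x + τ • u) K)

def slideBound (x : E) : ℝ :=
  sInf (slideCost u S K v x '' Icc 0 2)

def slideProfile (x : E) : ℝ :=
  max 0 (min (v x) (min 1 (slideBound u S K v x)))

variable {u S K v} {p x : E}

theorem half_le_alongModulus (τ : ℝ) : τ / 2 ≤ alongModulus u S K v τ := le_max_left _ _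

theorem alongModulus_nonneg {τ : ℝ} (hτ : 0 ≤ τ) : 0 ≤ alongModulus u S K v τ :=
  (div_nonneg hτ zero_le_two).trans (half_le_alongModulus τ)

namespace SlideSetup

variable (h : SlideSetup u S K v)
include h

theorem modulusSetup_hitPairs : ModulusSetup (hitPairs u S K) (fun q => v q.1) Prod.snd where
  isCompact := (h.isCompact_S.prod isCompact_Icc).inter_right
    (h.isCompact_K.isClosed.preimage (by fun_prop))
  continuous_f := h.continuous_v.comp continuous_fst
  continuous_d := continuous_snd
  f_nonneg q hq := h.v_nonneg q.1 hq.1.1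
  d_nonneg q hq := hq.1.2.1
  f_eq_zero q hq hq0 := (h.gap q.1 hq.1.1 q.2 hq.1.2.1 hq.2).resolve_right
    (by rw [hq0]; exact (h.v_nonneg q.1 hq.1.1).not_gt)

theorem continuous_alongModulus : Continuous (alongModulus u S K v) :=
  (continuous_id.div_const 2).max h.modulusSetup_hitPairs.continuous_modulus

theorem alongModulus_zero : alongModulus u S K v 0 = 0 := by
  simp [alongModulus, h.modulusSetup_hitPairs.modulus_of_nonpos le_rfl]

theorem le_alongModulus {p : E} {τ : ℝ} (hq : (p, τ) ∈ hitPairs u S K) :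
    v p ≤ alongModulus u S K v τ :=
  (h.modulusSetup_hitPairs.le_modulus hq).trans (le_max_right _ _)

theorem alongModulus_lt_add {a b : ℝ} (hab : a < b) :
    alongModulus u S K v b < alongModulus u S K v a + (b - a) := by
  have hlt : ∀ q ∈ hitPairs u S K, 0 < q.2 → v q.1 < q.2 := fun q hq hq0 =>
    (h.gap q.1 hq.1.1 q.2 hq.1.2.1 hq.2).elim (fun hv => hv ▸ hq0) id
  have := h.modulusSetup_hitPairs.modulus_lt_add hlt hab
  unfold alongModulus
  rw [← max_add_add_right]
  exact max_lt_max (by linarith) this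

theorem modulusSetup_across : ModulusSetup (S ×ˢ Icc (0 : ℝ) 2)
    (fun q => max (v q.1 - alongModulus u S K v q.2) 0) (fun q => infDist (q.1 + q.2 • u) K) where
  isCompact := h.isCompact_S.prod isCompact_Icc
  continuous_f := ((h.continuous_v.comp continuous_fst).sub
    (h.continuous_alongModulus.comp continuous_snd)).max continuous_const
  continuous_d := (continuous_infDist_pt K).comp (by fun_prop)
  f_nonneg _ _ := le_max_right _ _
  d_nonneg _ _ := infDist_nonneg
  f_eq_zero q hq hq0 := by
    have hK : q.1 + q.2 • u ∈ K := (h.isCompact_K.isClosed.mem_iff_infDist_zero h.nonempty_K).mpr hq0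
    exact max_eq_right (sub_nonpos.mpr (h.le_alongModulus ⟨hq, hK⟩))

theorem continuous_acrossModulus : Continuous (acrossModulus u S K v) :=
  h.modulusSetup_across.continuous_modulus

theorem acrossModulus_nonneg (r : ℝ) : 0 ≤ acrossModulus u S K v r :=
  h.modulusSetup_across.modulus_nonneg r

theorem acrossModulus_zero : acrossModulus u S K v 0 = 0 :=
  h.modulusSetup_across.modulus_of_nonpos le_rfl

theorem sub_alongModulus_le_acrossModulus {p : E} (hp : p ∈ S) {τ : ℝ} (hτ : τ ∈ Icc (0 : ℝ) 2) :
    v p - alongModulus u S K v τ ≤ acrossModulus u S K v (infDist (p + τ • u) K) :=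
  (le_max_left _ _).trans (h.modulusSetup_across.le_modulus (q := (p, τ)) ⟨hp, hτ⟩)

theorem continuous_slideCost : Continuous fun p : E × ℝ => slideCost u S K v p.1 p.2 :=
  (h.continuous_alongModulus.comp continuous_snd).add <|
    h.continuous_acrossModulus.comp <| (continuous_infDist_pt K).comp (by fun_prop)

theorem continuous_slideBound : Continuous (slideBound u S K v) :=
  isCompact_Icc.continuous_sInf h.continuous_slideCost

theorem slideCost_nonneg (x : E) {τ : ℝ} (hτ : 0 ≤ τ) : 0 ≤ slideCost u S K v x τ :=
  add_nonneg (alongModulus_nonneg hτ) (h.acrossModulus_nonneg _)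

theorem slideBound_le {x : E} {τ : ℝ} (hτ : τ ∈ Icc (0 : ℝ) 2) :
    slideBound u S K v x ≤ slideCost u S K v x τ :=
  csInf_le ⟨0, forall_mem_image.mpr fun _ hτ => h.slideCost_nonneg x hτ.1⟩ (mem_image_of_mem _ hτ)

theorem slideBound_nonpos {x : E} (hx : x ∈ K) : slideBound u S K v x ≤ 0 := by
  have := h.slideBound_le (x := x) (left_mem_Icc.mpr zero_le_two)
  rwa [slideCost, zero_smul, add_zero, infDist_zero_of_mem hx, h.alongModulus_zero,
    h.acrossModulus_zero, add_zero] at this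

theorem le_slideBound {p : E} (hp : p ∈ S) : v p ≤ slideBound u S K v p := by
  refine le_csInf ((nonempty_Icc.mpr zero_le_two).image _) (forall_mem_image.mpr fun τ hτ => ?_)
  rw [slideCost]
  linarith [h.sub_alongModulus_le_acrossModulus hp hτ]

theorem shearAdmissible_min_one_slideBound :
    ShearAdmissible u fun x => min 1 (slideBound u S K v x) := by
  intro x δ hδ
  obtain ⟨τ, hτ, hmin⟩ := isCompact_Icc.exists_sInf_image_eq (nonempty_Icc.mpr zero_le_two)
    (f := slideCost u S K v (x + δ • u))
    (h.continuous_slideCost.comp (continuous_const.prodMk continuous_id)).continuousOn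
  change slideBound u S K v (x + δ • u) = _ at hmin
  simp only [← min_add_add_right, hmin]
  refine lt_min (by linarith [min_le_left 1 (slideBound u S K v x)]) ?_
  have hcost := h.acrossModulus_nonneg (infDist (x + δ • u + τ • u) K)
  rcases le_or_gt (τ + δ) 2 with hle | hgt
  · -- the minimizer for `x + δ • u`, shifted by `δ`, is a competitor for `x`
    have hx := h.slideBound_le (x := x) ⟨by linarith [hτ.1], hle⟩
    rw [slideCost, add_smul, ← add_assoc, add_right_comm x] at hx
    have := h.alongModulus_lt_add (lt_add_of_pos_right τ hδ)
    rw [slideCost]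
    linarith [min_le_right 1 (slideBound u S K v x)]
  · have := half_le_alongModulus (u := u) (S := S) (K := K) (v := v) τ
    rw [slideCost]
    linarith [min_le_left 1 (slideBound u S K v x), hτ.2]

theorem continuous_slideProfile : Continuous (slideProfile u S K v) :=
  continuous_const.max (h.continuous_v.min (continuous_const.min h.continuous_slideBound))

theorem shearAdmissible_slideProfile : ShearAdmissible u (slideProfile u S K v) :=
  (shearAdmissible_of_forall_add_smul_eq fun _ _ => rfl).max <|
    (shearAdmissible_of_forall_add_smul_eq h.v_add_smul).min h.shearAdmissible_min_one_slideBound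

theorem slideProfile_eq (hp : p ∈ S) : slideProfile u S K v p = v p := by
  rw [slideProfile, min_eq_left (le_min (h.v_le_one p hp) (h.le_slideBound hp)),
    max_eq_right (h.v_nonneg p hp)]

theorem slideProfile_eq_zero (hx : x ∈ K) : slideProfile u S K v x = 0 :=
  max_eq_left <| (min_le_right _ _).trans <| (min_le_right _ _).trans (h.slideBound_nonpos hx)

end SlideSetup

theorem abs_slideProfile_le_one (x : E) : |slideProfile u S K v x| ≤ 1 :=
  abs_le.mpr ⟨neg_one_lt_zero.le.trans (le_max_left _ _),
    max_le zero_le_one ((min_le_right _ _).trans (min_le_left _ _))⟩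

end Profile

theorem range_eq_image_Iic_union_image_Ici {α X : Type*} [LinearOrder α] (c : α → X) (a : α) :
    range c = c '' Iic a ∪ c '' Ici a := by
  rw [← image_union, Iic_union_Ici, image_univ]

theorem inter_image_Ici_subset {α X : Type*} [LinearOrder α] {c : α → X} (hc : Injective c) {a : α}
    {T : Set X} (hT : T ∩ range c ⊆ c '' Iic a) : T ∩ c '' Ici a ⊆ {c a} := by
  rintro _ ⟨hxT, t, ht, rfl⟩
  obtain ⟨t', ht', htt'⟩ := hT ⟨hxT, t, rfl⟩
  rw [hc htt'] at ht'
  rw [le_antisymm ht' ht]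
  rfl

section Triangle

variable {E : Type*} [NormedAddCommGroup E] [NormedSpace ℝ E]

theorem AffineIndependent.linearIndependent_sub_sub {k V : Type*} [Ring k] [AddCommGroup V]
    [Module k V] {A B C : V} (h : AffineIndependent k ![A, B, C]) :
    LinearIndependent k ![B - A, C - A] := by
  rw [affineIndependent_iff_linearIndependent_vsub k _ (0 : Fin 3)] at h
  convert h.comp (fun i : Fin 2 => (⟨i.succ, Fin.succ_ne_zero i⟩ : {x : Fin 3 // x ≠ 0}))
    (fun i j hij => Fin.succ_injective _ (congrArg Subtype.val hij)) using 1
  ext i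
  fin_cases i <;> rfl

theorem LinearIndependent.exists_continuousLinearMap_eq_one_eq_zero [FiniteDimensional ℝ E]
    {w u : E} (h : LinearIndependent ℝ ![w, u]) : ∃ φ : E →L[ℝ] ℝ, φ w = 1 ∧ φ u = 0 := by
  have hw : w ∉ ℝ ∙ u := by
    rw [Submodule.mem_span_singleton]
    rintro ⟨k, rfl⟩
    simpa using LinearIndependent.pair_iff.mp h (-1) k (by simp)
  obtain ⟨f, hfw, hfu⟩ := Submodule.exists_dual_map_eq_bot_of_notMem hw inferInstance
  have hu : f u = 0 := by
    simpa [hfu] using Submodule.mem_map_of_mem (f := f) (Submodule.mem_span_singleton_self u)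
  exact ⟨LinearMap.toContinuousLinearMap ((f w)⁻¹ • f), by simp [hfw], by simp [hu]⟩

theorem add_smul_sub_add_smul_sub_mem_convexHull (A B C : E) {θ τ : ℝ} (hθ : 0 ≤ θ)
    (hτ : 0 ≤ τ) (h : θ + τ ≤ 1) : A + θ • (B - A) + τ • (C - A) ∈ convexHull ℝ {A, B, C} := by
  have := (convex_convexHull ℝ {A, B, C}).sum_mem (t := Finset.univ) (w := ![1 - θ - τ, θ, τ])
    (z := ![A, B, C]) (by intro i _; fin_cases i <;> simp <;> linarith)
    (by simp [Fin.sum_univ_three]; ring)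
    (by intro i _; fin_cases i <;> apply subset_convexHull <;> simp)
  convert this using 1
  simp [Fin.sum_univ_three]
  module

theorem slideSetup_of_triangle {c : I → E} (hc : Continuous c) (hc_inj : Injective c) {a : I}
    {A B C : E} (hB : B = c a) (hseg : c '' Iic a = segment ℝ A B)
    (hTc : convexHull ℝ {A, B, C} ∩ range c = segment ℝ A B) {φ : E →L[ℝ] ℝ}
    (hφB : φ (B - A) = 1) (hφC : φ (C - A) = 0) :
    SlideSetup (C - A) (segment ℝ A B) (c '' Ici a) (fun x => 1 - φ (x - A)) := by
  have hv : ∀ θ : ℝ, 1 - φ (A + θ • (B - A) - A) = 1 - θ := fun θ => by simp [hφB]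
  refine ⟨segment_eq_image' ℝ A B ▸ isCompact_Icc.image (by fun_prop),
    isClosed_Ici.isCompact.image hc, ⟨B, a, self_mem_Ici, hB.symm⟩,
    by fun_prop, fun x τ => by simp [add_sub_right_comm, hφC], ?_, ?_, ?_⟩
  · rw [segment_eq_image']
    rintro _ ⟨θ, hθ, rfl⟩
    simp only [hv]; linarith [hθ.2]
  · rw [segment_eq_image']
    rintro _ ⟨θ, hθ, rfl⟩
    simp only [hv]; linarith [hθ.1]
  rw [segment_eq_image']
  rintro _ ⟨θ, hθ, rfl⟩ τ hτ hK
  simp only [hv]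
  by_contra! hne
  have hT := add_smul_sub_add_smul_sub_mem_convexHull A B C hθ.1 hτ (by linarith [hne.2])
  have hBeq : A + θ • (B - A) + τ • (C - A) = B :=
    inter_image_Ici_subset hc_inj (hTc.trans hseg.symm).le ⟨hT, hK⟩ |>.trans hB.symm
  have := congrArg (fun x => φ (x - A)) hBeq
  simp [hφB, hφC] at this
  exact hne.1 (by linarith)

end Triangle

theorem image_shear_segment {E : Type*} [AddCommGroup E] [Module ℝ E] {A B C : E} {f : E → ℝ}
    (hf : ∀ θ ∈ Icc (0 : ℝ) 1, f (A + θ • (B - A)) = 1 - θ) :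
    (fun x => x + f x • (C - A)) '' segment ℝ A B = segment ℝ C B := by
  rw [segment_eq_image', segment_eq_image', image_image]
  refine image_congr fun θ hθ => ?_
  rw [hf θ hθ]
  module

theorem image_range_shear {α E : Type*} [LinearOrder α] [AddCommGroup E] [Module ℝ E]
    {c c' : α → E} {a : α} {A B C : E} {f : E → ℝ} (hseg : c '' Iic a = segment ℝ A B)
    (hseg' : c' '' Iic a = segment ℝ C B) (hfix : EqOn c' c (Ici a))
    (hfAB : ∀ θ ∈ Icc (0 : ℝ) 1, f (A + θ • (B - A)) = 1 - θ) (hfK : ∀ x ∈ c '' Ici a, f x = 0) :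
    (fun x => x + f x • (C - A)) '' range c = range c' := by
  have hK : (fun x => x + f x • (C - A)) '' (c '' Ici a) = c '' Ici a :=
    (image_congr fun x hx => by rw [hfK x hx, zero_smul, add_zero]; rfl).trans (image_id _)
  rw [range_eq_image_Iic_union_image_Ici c a, range_eq_image_Iic_union_image_Ici c' a, image_union,
    hseg, hseg', image_shear_segment hfAB, hK, image_congr hfix]

theorem IsLineWithDir.add_smul_mem {v : R3} {ℓ : Set R3} (h : IsLineWithDir v ℓ) {x : R3}
    (hx : x ∈ ℓ) (r : ℝ) : x + r • v ∈ ℓ := by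
  obtain ⟨p, rfl⟩ := h
  obtain ⟨t, rfl⟩ := hx
  exact ⟨t + r, by rw [add_smul, add_assoc]⟩

theorem IsLineWithDir.exists_sub_eq_smul {v : R3} {ℓ : Set R3} (h : IsLineWithDir v ℓ)
    {x y : R3} (hx : x ∈ ℓ) (hy : y ∈ ℓ) : ∃ k : ℝ, y - x = k • v := by
  obtain ⟨p, rfl⟩ := h
  obtain ⟨s, rfl⟩ := hx
  obtain ⟨t, rfl⟩ := hy
  exact ⟨t - s, by rw [sub_smul]; abel⟩

theorem RailsPair.add_smul_sub_mem {ℓ1 ℓ2 : Set R3} (h : RailsPair ℓ1 ℓ2) {A C : R3}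
    (hA : A ∈ ℓ1) (hC : C ∈ ℓ1) {ℓ : Set R3} (hℓ : ℓ = ℓ1 ∨ ℓ = ℓ2) {x : R3} (hx : x ∈ ℓ)
    (r : ℝ) : x + r • (C - A) ∈ ℓ := by
  obtain ⟨⟨v, -, h1, h2⟩, -⟩ := h
  obtain ⟨k, hk⟩ := h1.exists_sub_eq_smul hA hC
  rw [hk, smul_smul]
  rcases hℓ with rfl | rfl
  exacts [h1.add_smul_mem hx _, h2.add_smul_mem hx _]

theorem RailsPair.image_shear {ℓ1 ℓ2 : Set R3} (h : RailsPair ℓ1 ℓ2) {A C : R3} (hA : A ∈ ℓ1)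
    (hC : C ∈ ℓ1) {f : R3 → ℝ} (hsurj : Surjective fun x => x + f x • (C - A)) :
    (fun x => x + f x • (C - A)) '' ℓ1 = ℓ1 ∧ (fun x => x + f x • (C - A)) '' ℓ2 = ℓ2 :=
  ⟨image_shear_of_forall_add_smul_mem hsurj fun _ hx => h.add_smul_sub_mem hA hC (.inl rfl) hx,
    image_shear_of_forall_add_smul_mem hsurj fun _ hx => h.add_smul_sub_mem hA hC (.inr rfl) hx⟩

theorem slide_move_is_rail_isotopy_general
    (ℓ1 ℓ2 : Set R3) (hrails : RailsPair ℓ1 ℓ2)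
    (c c' : unitInterval → R3) (hc : RailArc ℓ1 ℓ2 c)
    (a : unitInterval)
    (A B C : R3) (hA : A = c 0) (hB : B = c a) (hC : C ∈ ℓ1)
    (hseg : c '' {t : unitInterval | (t : ℝ) ≤ (a : ℝ)} = segment ℝ A B)
    (hindep : AffineIndependent ℝ ![A, B, C])
    (T : Set R3) (hT : T = convexHull ℝ {A, B, C})
    (hTc : T ∩ Set.range c = segment ℝ A B)
    (hfix : ∀ t : unitInterval, (a : ℝ) ≤ (t : ℝ) → c' t = c t)
    (hseg' : c' '' {t : unitInterval | (t : ℝ) ≤ (a : ℝ)} = segment ℝ C B) :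
    ∃ H : unitInterval → R3 → R3, RailIsotopy ℓ1 ℓ2 c c' H := by
  obtain ⟨hc_cont, hc_inj, hc0, -⟩ := hc
  obtain ⟨φ, hφB, hφC⟩ :=
    hindep.linearIndependent_sub_sub.exists_continuousLinearMap_eq_one_eq_zero
  subst hT
  have hS := slideSetup_of_triangle hc_cont hc_inj hB hseg hTc hφB hφC
  set f := slideProfile (C - A) (segment ℝ A B) (c '' Ici a) fun x => 1 - φ (x - A)
  have hf := hS.continuous_slideProfile
  refine ⟨fun s x => x + ((s : ℝ) * f x) • (C - A), by fun_prop, by funext x; simp, fun s => ?_, ?_⟩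
  · obtain ⟨Φ, hΦ⟩ :=
      hS.shearAdmissible_slideProfile.exists_homeomorph_const_mul hf abs_slideProfile_le_one s
    exact ⟨Φ, hΦ, hΦ ▸ hrails.image_shear (hA ▸ hc0) hC (hΦ ▸ Φ.surjective)⟩
  simp only [Icc.coe_one, one_mul]
  refine image_range_shear hseg hseg' (fun t ht => hfix t ht) (fun θ hθ => ?_)
    fun x hx => hS.slideProfile_eq_zero hx
  exact (hS.slideProfile_eq (segment_eq_image' ℝ A B ▸ mem_image_of_mem _ hθ)).trans (by simp [hφB])

/-- A space slide move on a rail arc (sliding the endpoint of the arc along a rail, replacing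
the initial straight segment `[A,B]` by `[C,B]`, where `A, C ∈ ℓ1` and the triangle
`T = conv{A,B,C}` meets the arc only in `[A,B]` and meets the rails only in `[A,C]`) is
realized by a rail isotopy of `ℝ³`. -/
theorem slide_move_is_rail_isotopy
    (ℓ1 ℓ2 : Set R3) (hrails : RailsPair ℓ1 ℓ2)
    (c c' : unitInterval → R3) (hc : RailArc ℓ1 ℓ2 c) (hc' : RailArc ℓ1 ℓ2 c')
    (a : unitInterval) (ha0 : 0 < (a : ℝ)) (ha1 : (a : ℝ) < 1)
    (A B C : R3) (hA : A = c 0) (hB : B = c a) (hC : C ∈ ℓ1)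
    (hseg : c '' {t : unitInterval | (t : ℝ) ≤ (a : ℝ)} = segment ℝ A B)
    (hindep : AffineIndependent ℝ ![A, B, C])
    (T : Set R3) (hT : T = convexHull ℝ {A, B, C})
    (hTc : T ∩ Set.range c = segment ℝ A B)
    (hTrails : T ∩ (ℓ1 ∪ ℓ2) = segment ℝ A C)
    (hfix : ∀ t : unitInterval, (a : ℝ) ≤ (t : ℝ) → c' t = c t)
    (hC0 : c' 0 = C)
    (hseg' : c' '' {t : unitInterval | (t : ℝ) ≤ (a : ℝ)} = segment ℝ C B) :
    ∃ H : unitInterval → R3 → R3, RailIsotopy ℓ1 ℓ2 c c' H :=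
  slide_move_is_rail_isotopy_general ℓ1 ℓ2 hrails c c' hc a A B C hA hB hC hseg hindep T hT hTc hfix
    hseg'
end
end
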